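/- arXiv:1909.10612 — 13 statements merged into one kernel-verified Lean document; each statement's English description precedes it below -/
import Mathlib

section
/- Let n ≥ 2 be an integer, let k_0, …, k_{n−1}, γ_1, …, γ_n, θ, k, δ_1, δ_2 be positive reals, and set r_0 = 1 + Σ_{j=1}^n (1/j!)·(k_0⋯k_{j−1})/(γ_1⋯γ_j). Then the system of n+3 polynomial equations 0 = γ_1 x_1 − k_0 x_0 y_2; 0 = k_{j−1} x_{j−1} y_2 + (j+1)γ_{j+1} x_{j+1} − (k_j y_2 + jγ_j) x_j for 1 ≤ j ≤ n−2; 0 = k_{n−2} x_{n−2} y_2 + nγ_n(1 − Σ_{j=0}^{n−1} x_j) − (k_{n−1} y_2 + (n−1)γ_{n−1}) x_{n−1}; 0 = k(y_2 − y_1²) + δ_1(z − y_1); 0 = θ(−Σ_{j=0}^{n−1} k_j x_j y_2 + Σ_{j=1}^{n−1} jγ_j x_j + nγ_n(1 − Σ_{j=0}^{n−1} x_j)) − y_2 + y_1²; 0 = δ_2(r_0 x_0 − z), has exactly one solution (x_0,…,x_{n−1},y_1,y_2,z) with all coordinates nonnegative, namely x̄_0 = 1/r_0, x̄_j = (1/j!)·(k_0⋯k_{j−1})/(γ_1⋯γ_j)·(1/r_0)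 for 1 ≤ j ≤ n−1, and ȳ_1 = ȳ_2 = z̄ = 1. -/
/-!
The binding equations describe a birth–death chain in the number of occupied sites: they say
that the net fluxes between `j` and `j + 1` occupied sites all vanish, so `x_j = c_j y₂ʲ x_0`,
and normalisation gives `x_j = c_j y₂ʲ / Z(y₂)` with `Z(y) = ∑_{j ≤ n} c_j yʲ`. The bracket in the
`θ`-equation is the sum of these fluxes, hence `y₂ = y₁²`, and the `δ₁`- and `δ₂`-equations give
`z = y₁ = r₀ x_0 = Z(1) / Z(y₁²)`. As `r₀ = Z(1)` and `t ↦ t Z(t²)` is strictly increasing on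
`[0, ∞)`, this forces `y₁ = 1`.
-/

open Finset

theorem sum_Icc_one_eq_sum_range {M : Type*} [AddCommMonoid M] (f : ℕ → M) (n : ℕ) :
    ∑ j ∈ Icc 1 n, f j = ∑ j ∈ range n, f (j + 1) := by
  rw [← Ico_add_one_right_eq_Icc, sum_Ico_eq_sum_range, Nat.add_sub_cancel]
  simp only [add_comm 1]

theorem eq_one_of_mul_sum_pow_eq_sum {ι : Type*} {s : Finset ι} {c : ι → ℝ} {e : ι → ℕ} {t : ℝ}
    (hs : s.Nonempty) (hc : ∀ i ∈ s, 0 < c i) (ht : 0 ≤ t)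
    (h : t * ∑ i ∈ s, c i * t ^ e i = ∑ i ∈ s, c i) : t = 1 := by
  have hpos : 0 < ∑ i ∈ s, c i := sum_pos hc hs
  rcases lt_trichotomy t 1 with hlt | heq | hgt
  · have : ∑ i ∈ s, c i * t ^ e i ≤ ∑ i ∈ s, c i := sum_le_sum fun i hi =>
      mul_le_of_le_one_right (hc i hi).le (pow_le_one₀ ht hlt.le)
    nlinarith
  · exact heq
  · have : ∑ i ∈ s, c i ≤ ∑ i ∈ s, c i * t ^ e i := sum_le_sum fun i hi =>
      le_mul_of_one_le_right (hc i hi).le (one_le_pow₀ hgt.le)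
    nlinarith

theorem forall_lt_succ_eq_zero_iff {M : Type*} [Zero M] {F : ℕ → M} {n : ℕ} :
    (∀ j < n + 1, F j = 0) ↔ F 0 = 0 ∧ ∀ j < n, F (j + 1) = F j := by
  induction n with
  | zero => simp
  | succ n ih =>
    rw [Nat.forall_lt_succ_right, ih, Nat.forall_lt_succ_right]
    grind

namespace Hes1

noncomputable def bindingCoeff (k γ : ℕ → ℝ) (j : ℕ) : ℝ :=
  (1 / (Nat.factorial j : ℝ)) * (∏ i ∈ range j, k i) / (∏ i ∈ Icc 1 j, γ i)

noncomputable def partitionFunction (k γ : ℕ → ℝ) (n : ℕ) (y : ℝ) : ℝ :=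
  ∑ j ∈ range (n + 1), bindingCoeff k γ j * y ^ j

/-- `x_n := 1 - ∑_{j<n} x_j`, the probability that all `n` sites are occupied. -/
noncomputable def occupancy (x : ℕ → ℝ) (n : ℕ) : ℕ → ℝ :=
  Function.update x n (1 - ∑ j ∈ range n, x j)

/-- Net rate from `j + 1` to `j` occupied sites; the binding equations say exactly that these
fluxes vanish (detailed balance). -/
def flux (k γ : ℕ → ℝ) (y : ℝ) (p : ℕ → ℝ) (j : ℕ) : ℝ :=
  (j + 1) * γ (j + 1) * p (j + 1) - k j * p j * y

section bindingCoeff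

variable (k γ : ℕ → ℝ)

@[simp]
theorem bindingCoeff_zero : bindingCoeff k γ 0 = 1 := by
  simp [bindingCoeff]

theorem bindingCoeff_succ (j : ℕ) :
    bindingCoeff k γ (j + 1) = bindingCoeff k γ j * k j / ((j + 1) * γ (j + 1)) := by
  simp only [bindingCoeff, prod_range_succ, prod_Icc_succ_top (Nat.le_add_left 1 j),
    Nat.factorial_succ, Nat.cast_mul, Nat.cast_succ, div_eq_mul_inv, mul_inv]
  ring

theorem succ_mul_bindingCoeff_succ {j : ℕ} (hγ : γ (j + 1) ≠ 0) :
    (j + 1) * γ (j + 1) * bindingCoeff k γ (j + 1) = k j * bindingCoeff k γ j := by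
  rw [bindingCoeff_succ]
  field_simp

theorem bindingCoeff_pos {n j : ℕ} (hk : ∀ i < n, 0 < k i) (hγ : ∀ i ∈ Icc 1 n, 0 < γ i)
    (hj : j ≤ n) : 0 < bindingCoeff k γ j := by
  have hkprod := prod_pos fun i hi => hk i ((mem_range.1 hi).trans_le hj)
  have hγprod := prod_pos fun i hi => hγ i (Icc_subset_Icc_right hj hi)
  unfold bindingCoeff
  positivity

theorem partitionFunction_one (n : ℕ) :
    partitionFunction k γ n 1 = 1 + ∑ j ∈ Icc 1 n, bindingCoeff k γ j := by
  rw [partitionFunction, sum_range_succ', sum_Icc_one_eq_sum_range]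
  simp [add_comm]

theorem partitionFunction_pos {n : ℕ} (hk : ∀ i < n, 0 < k i) (hγ : ∀ i ∈ Icc 1 n, 0 < γ i)
    {y : ℝ} (hy : 0 ≤ y) : 0 < partitionFunction k γ n y :=
  sum_pos' (fun j hj => mul_nonneg (bindingCoeff_pos k γ hk hγ (Nat.lt_add_one_iff.1
    (mem_range.1 hj))).le (pow_nonneg hy j)) ⟨0, by simp⟩

theorem eq_one_of_mul_partitionFunction_sq_eq {n : ℕ} (hk : ∀ i < n, 0 < k i)
    (hγ : ∀ i ∈ Icc 1 n, 0 < γ i) {t : ℝ} (ht : 0 ≤ t)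
    (h : t * partitionFunction k γ n (t ^ 2) = partitionFunction k γ n 1) : t = 1 := by
  refine eq_one_of_mul_sum_pow_eq_sum (e := fun j => 2 * j) nonempty_range_add_one
    (fun j hj => bindingCoeff_pos k γ hk hγ (Nat.lt_add_one_iff.1 (mem_range.1 hj))) ht ?_
  simpa [partitionFunction, pow_mul] using h

end bindingCoeff

section occupancy

variable {x : ℕ → ℝ} {n j : ℕ}

theorem occupancy_of_lt (h : j < n) : occupancy x n j = x j :=
  Function.update_of_ne h.ne _ _

theorem occupancy_self : occupancy x n n = 1 - ∑ j ∈ range n, x j :=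
  Function.update_self _ _ _

theorem sum_occupancy : ∑ j ∈ range (n + 1), occupancy x n j = 1 := by
  rw [sum_range_succ, occupancy_self,
    sum_congr rfl fun j hj => occupancy_of_lt (mem_range.1 hj)]
  ring

theorem occupancy_eq_iff (k γ : ℕ → ℝ) {y : ℝ} (hZ : partitionFunction k γ n y ≠ 0) :
    (∀ j ≤ n, occupancy x n j = bindingCoeff k γ j * y ^ j * occupancy x n 0) ↔
      ∀ j < n, x j = bindingCoeff k γ j * y ^ j / partitionFunction k γ n y := by
  constructor
  · intro h j hj
    have hmass := sum_occupancy (x := x) (n := n)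
    rw [sum_congr rfl fun j hj => h j (Nat.lt_add_one_iff.1 (mem_range.1 hj)),
      ← sum_mul] at hmass
    rw [← occupancy_of_lt (x := x) hj, h j hj.le, eq_div_iff hZ, partitionFunction]
    linear_combination bindingCoeff k γ j * y ^ j * hmass
  · intro h
    have hp : ∀ j ≤ n,
        occupancy x n j = bindingCoeff k γ j * y ^ j / partitionFunction k γ n y := by
      intro j hj
      rcases hj.lt_or_eq with hj | rfl
      · rw [occupancy_of_lt hj, h j hj]
      · rw [occupancy_self, sum_congr rfl fun j hj => h j (mem_range.1 hj), ← sum_div]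
        rw [partitionFunction, sum_range_succ] at hZ ⊢
        field_simp
        ring
    intro j hj
    rw [hp j hj, hp 0 (Nat.zero_le n), bindingCoeff_zero]
    ring

end occupancy

section flux

variable (k γ : ℕ → ℝ) (y : ℝ)

theorem flux_succ_sub_flux (p : ℕ → ℝ) (i : ℕ) :
    flux k γ y p (i + 1) - flux k γ y p i =
      k i * p i * y + ((i + 1 : ℕ) + 1) * γ (i + 1 + 1) * p (i + 1 + 1)
        - (k (i + 1) * y + (i + 1 : ℕ) * γ (i + 1)) * p (i + 1) := by
  simp only [flux]
  push_cast
  ring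

theorem forall_flux_eq_zero_iff {p : ℕ → ℝ} {n : ℕ} (hγ : ∀ j ∈ Icc 1 n, γ j ≠ 0) :
    (∀ j < n, flux k γ y p j = 0) ↔ ∀ j ≤ n, p j = bindingCoeff k γ j * y ^ j * p 0 := by
  constructor
  · intro h j hj
    induction j with
    | zero => simp
    | succ j ih =>
      have hγj := hγ (j + 1) (mem_Icc.2 ⟨by omega, hj⟩)
      have hflux := h j (by omega)
      rw [flux] at hflux
      refine mul_left_cancel₀ (mul_ne_zero (Nat.cast_add_one_ne_zero j) hγj) ?_
      linear_combination hflux + k j * y * ih (by omega)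
        - y ^ (j + 1) * p 0 * succ_mul_bindingCoeff_succ k γ hγj
  · intro h j hj
    have hγj := hγ (j + 1) (mem_Icc.2 ⟨by omega, hj⟩)
    rw [flux, h j (by omega), h (j + 1) hj]
    linear_combination y ^ (j + 1) * p 0 * succ_mul_bindingCoeff_succ k γ hγj

variable {x : ℕ → ℝ} {n : ℕ}

theorem binding_equations_iff (hn : 2 ≤ n) :
    ((0 = γ 1 * x 1 - k 0 * x 0 * y) ∧
      (∀ j, 1 ≤ j → j ≤ n - 2 →
        0 = k (j - 1) * x (j - 1) * y + ((j : ℝ) + 1) * γ (j + 1) * x (j + 1)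
            - (k j * y + (j : ℝ) * γ j) * x j) ∧
      (0 = k (n - 2) * x (n - 2) * y
            + (n : ℝ) * γ n * (1 - ∑ j ∈ range n, x j)
            - (k (n - 1) * y + ((n : ℝ) - 1) * γ (n - 1)) * x (n - 1)))
    ↔ ∀ j < n, flux k γ y (occupancy x n) j = 0 := by
  obtain ⟨m, rfl⟩ : ∃ m, n = m + 1 + 1 := ⟨n - 2, by omega⟩
  have hp : ∀ j < m + 1 + 1, occupancy x (m + 1 + 1) j = x j := fun j => occupancy_of_lt
  have hflux_zero : flux k γ y (occupancy x (m + 1 + 1)) 0 = γ 1 * x 1 - k 0 * x 0 * y := by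
    simp [flux, hp]
  have hmiddle : ∀ i < m, flux k γ y (occupancy x (m + 1 + 1)) (i + 1)
      - flux k γ y (occupancy x (m + 1 + 1)) i =
        k i * x i * y + ((i + 1 : ℕ) + 1) * γ (i + 1 + 1) * x (i + 1 + 1)
          - (k (i + 1) * y + (i + 1 : ℕ) * γ (i + 1)) * x (i + 1) := by
    intro i hi
    rw [flux_succ_sub_flux, hp i (by omega), hp (i + 1) (by omega), hp (i + 1 + 1) (by omega)]
  have hlast : flux k γ y (occupancy x (m + 1 + 1)) (m + 1)
      - flux k γ y (occupancy x (m + 1 + 1)) m =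
        k m * x m * y + ((m + 1 + 1 : ℕ) : ℝ) * γ (m + 1 + 1) * (1 - ∑ j ∈ range (m + 1 + 1), x j)
          - (k (m + 1) * y + (((m + 1 + 1 : ℕ) : ℝ) - 1) * γ (m + 1)) * x (m + 1) := by
    rw [flux_succ_sub_flux, hp m (by omega), hp (m + 1) (by omega), occupancy_self]
    push_cast
    ring
  rw [forall_lt_succ_eq_zero_iff, Nat.forall_lt_succ_right, hflux_zero,
    ← sub_eq_zero (a := flux k γ y _ (m + 1)), hlast]
  simp only [show m + 1 + 1 - 2 = m by omega, eq_comm (a := (0 : ℝ))]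
  refine and_congr_right' (and_congr_left' ⟨fun h i hi => ?_, fun h j hj1 hj2 => ?_⟩)
  · rw [← sub_eq_zero, hmiddle i hi]
    simpa using h (i + 1) (by omega) (by omega)
  · obtain ⟨i, rfl⟩ : ∃ i, j = i + 1 := ⟨j - 1, by omega⟩
    have := sub_eq_zero.2 (h i (by omega))
    rw [hmiddle i (by omega)] at this
    simpa using this

theorem sum_flux_occupancy (hn : 1 ≤ n) :
    ∑ j ∈ range n, flux k γ y (occupancy x n) j =
      -(∑ j ∈ range n, k j * x j * y) + (∑ j ∈ Icc 1 (n - 1), (j : ℝ) * γ j * x j)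
        + (n : ℝ) * γ n * (1 - ∑ j ∈ range n, x j) := by
  obtain ⟨m, rfl⟩ : ∃ m, n = m + 1 := ⟨n - 1, by omega⟩
  have hunbind : ∑ j ∈ range (m + 1), (j + 1) * γ (j + 1) * occupancy x (m + 1) (j + 1) =
      ∑ j ∈ Icc 1 m, (j : ℝ) * γ j * x j
        + (m + 1) * γ (m + 1) * (1 - ∑ j ∈ range (m + 1), x j) := by
    rw [sum_range_succ, occupancy_self, sum_Icc_one_eq_sum_range]
    congr 1
    refine sum_congr rfl fun j hj => ?_
    rw [occupancy_of_lt (by simp at hj; omega)]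
    push_cast
    ring
  have hbind : ∑ j ∈ range (m + 1), k j * occupancy x (m + 1) j * y =
      ∑ j ∈ range (m + 1), k j * x j * y :=
    sum_congr rfl fun j hj => by rw [occupancy_of_lt (mem_range.1 hj)]
  simp only [flux, sum_sub_distrib, hunbind, hbind, Nat.add_sub_cancel]
  push_cast
  ring

theorem forall_flux_occupancy_eq_zero_iff (hγ : ∀ j ∈ Icc 1 n, γ j ≠ 0)
    (hZ : partitionFunction k γ n y ≠ 0) :
    (∀ j < n, flux k γ y (occupancy x n) j = 0) ↔
      ∀ j < n, x j = bindingCoeff k γ j * y ^ j / partitionFunction k γ n y :=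
  (forall_flux_eq_zero_iff k γ y hγ).trans (occupancy_eq_iff k γ hZ)

end flux

end Hes1

open Hes1

theorem stmt_1_general (n : ℕ) (hn : 2 ≤ n)
    (kk γ : ℕ → ℝ) (θ kp δ1 δ2 : ℝ)
    (hkk : ∀ j < n, 0 < kk j) (hγ : ∀ j ∈ Finset.Icc 1 n, 0 < γ j)
    (hδ1 : 0 < δ1) (hδ2 : 0 < δ2)
    (c : ℕ → ℝ)
    (hcdef : ∀ j, c j = (1 / (Nat.factorial j : ℝ)) *
        (∏ i ∈ Finset.range j, kk i) / (∏ i ∈ Finset.Icc 1 j, γ i))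
    (r0 : ℝ) (hr0 : r0 = 1 + ∑ j ∈ Finset.Icc 1 n, c j)
    (x : ℕ → ℝ) (y1 y2 z : ℝ) :
    ((∀ j < n, 0 ≤ x j) ∧ 0 ≤ y1 ∧ 0 ≤ y2 ∧ 0 ≤ z ∧
      (0 = γ 1 * x 1 - kk 0 * x 0 * y2) ∧
      (∀ j, 1 ≤ j → j ≤ n - 2 →
        0 = kk (j - 1) * x (j - 1) * y2 + ((j : ℝ) + 1) * γ (j + 1) * x (j + 1)
            - (kk j * y2 + (j : ℝ) * γ j) * x j) ∧
      (0 = kk (n - 2) * x (n - 2) * y2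
            + (n : ℝ) * γ n * (1 - ∑ j ∈ Finset.range n, x j)
            - (kk (n - 1) * y2 + ((n : ℝ) - 1) * γ (n - 1)) * x (n - 1)) ∧
      (0 = kp * (y2 - y1 ^ 2) + δ1 * (z - y1)) ∧
      (0 = θ * (-(∑ j ∈ Finset.range n, kk j * x j * y2)
            + (∑ j ∈ Finset.Icc 1 (n - 1), (j : ℝ) * γ j * x j)
            + (n : ℝ) * γ n * (1 - ∑ j ∈ Finset.range n, x j)) - y2 + y1 ^ 2) ∧
      (0 = δ2 * (r0 * x 0 - z)))
    ↔ ((∀ j < n, x j = c j / r0) ∧ y1 = 1 ∧ y2 = 1 ∧ z = 1) := by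
  obtain rfl : c = bindingCoeff kk γ := funext hcdef
  rw [← partitionFunction_one] at hr0
  subst hr0
  have hγ0 : ∀ j ∈ Icc 1 n, γ j ≠ 0 := fun j hj => (hγ j hj).ne'
  have hZ : ∀ {y}, 0 ≤ y → 0 < partitionFunction kk γ n y := partitionFunction_pos kk γ hkk hγ
  constructor
  · rintro ⟨-, hy1, -, -, E0, EC, EL, EY, ET, EZ⟩
    have hflux := (binding_equations_iff kk γ y2 hn).1 ⟨E0, EC, EL⟩
    rw [← sum_flux_occupancy kk γ y2 (by omega),
      sum_eq_zero fun j hj => hflux j (mem_range.1 hj)] at ET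
    obtain rfl : y2 = y1 ^ 2 := by linarith
    have hx := (forall_flux_occupancy_eq_zero_iff kk γ _ hγ0 (hZ (sq_nonneg y1)).ne').1 hflux
    have hz : z = y1 := by simpa [hδ1.ne', sub_eq_zero, eq_comm] using EY
    obtain rfl : y1 = 1 := by
      refine eq_one_of_mul_partitionFunction_sq_eq kk γ hkk hγ hy1 ?_
      have hzx := sub_eq_zero.1 ((mul_eq_zero.1 EZ.symm).resolve_left hδ2.ne')
      rw [hx 0 (by omega), bindingCoeff_zero, pow_zero, one_mul, mul_one_div, hz,
        div_eq_iff (hZ (sq_nonneg y1)).ne'] at hzx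
      exact hzx.symm
    exact ⟨fun j hj => by simpa using hx j hj, rfl, by norm_num, hz⟩
  · rintro ⟨hx, rfl, rfl, rfl⟩
    have hflux := (forall_flux_occupancy_eq_zero_iff kk γ 1 hγ0 (hZ zero_le_one).ne').2
      (by simpa using hx)
    obtain ⟨E0, EC, EL⟩ := (binding_equations_iff kk γ 1 hn).2 hflux
    refine ⟨fun j hj => ?_, zero_le_one, zero_le_one, zero_le_one, E0, EC, EL, by ring, ?_, ?_⟩
    · rw [hx j hj]
      exact div_nonneg (bindingCoeff_pos kk γ hkk hγ hj.le).le (hZ zero_le_one).le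
    · rw [← sum_flux_occupancy kk γ 1 (by omega), sum_eq_zero fun j hj => hflux j (mem_range.1 hj)]
      ring
    · rw [hx 0 (by omega), bindingCoeff_zero, mul_one_div_cancel (hZ zero_le_one).ne']
      ring

/-- The steady-state equations of the nondimensional Hes1 gene expression model
with `n ≥ 2` binding sites have exactly one nonnegative solution, namely
`x̄_j = c_j / r_0` (with `c_0 = 1`), `ȳ_1 = ȳ_2 = z̄ = 1`. -/
theorem stmt_1 (n : ℕ) (hn : 2 ≤ n)
    (kk γ : ℕ → ℝ) (θ kp δ1 δ2 : ℝ)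
    (hkk : ∀ j < n, 0 < kk j) (hγ : ∀ j ∈ Finset.Icc 1 n, 0 < γ j)
    (hθ : 0 < θ) (hkp : 0 < kp) (hδ1 : 0 < δ1) (hδ2 : 0 < δ2)
    (c : ℕ → ℝ)
    (hcdef : ∀ j, c j = (1 / (Nat.factorial j : ℝ)) *
        (∏ i ∈ Finset.range j, kk i) / (∏ i ∈ Finset.Icc 1 j, γ i))
    (r0 : ℝ) (hr0 : r0 = 1 + ∑ j ∈ Finset.Icc 1 n, c j)
    (x : ℕ → ℝ) (y1 y2 z : ℝ) :
    ((∀ j < n, 0 ≤ x j) ∧ 0 ≤ y1 ∧ 0 ≤ y2 ∧ 0 ≤ z ∧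
      (0 = γ 1 * x 1 - kk 0 * x 0 * y2) ∧
      (∀ j, 1 ≤ j → j ≤ n - 2 →
        0 = kk (j - 1) * x (j - 1) * y2 + ((j : ℝ) + 1) * γ (j + 1) * x (j + 1)
            - (kk j * y2 + (j : ℝ) * γ j) * x j) ∧
      (0 = kk (n - 2) * x (n - 2) * y2
            + (n : ℝ) * γ n * (1 - ∑ j ∈ Finset.range n, x j)
            - (kk (n - 1) * y2 + ((n : ℝ) - 1) * γ (n - 1)) * x (n - 1)) ∧
      (0 = kp * (y2 - y1 ^ 2) + δ1 * (z - y1)) ∧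
      (0 = θ * (-(∑ j ∈ Finset.range n, kk j * x j * y2)
            + (∑ j ∈ Finset.Icc 1 (n - 1), (j : ℝ) * γ j * x j)
            + (n : ℝ) * γ n * (1 - ∑ j ∈ Finset.range n, x j)) - y2 + y1 ^ 2) ∧
      (0 = δ2 * (r0 * x 0 - z)))
    ↔ ((∀ j < n, x j = c j / r0) ∧ y1 = 1 ∧ y2 = 1 ∧ z = 1) :=
  stmt_1_general n hn kk γ θ kp δ1 δ2 hkk hγ hδ1 hδ2 c hcdef r0 hr0 x y1 y2 z
end

section
/- Let n ≥ 1, let k_0, …, k_{n−1} > 0, γ_1, …, γ_n > 0, y_2 > 0, set γ̃_j = jγ_j for 1 ≤ j ≤ n, γ̃_0 = 0 and k_n = 0, and define α_j = −k_{j−1} y_2 − γ̃_{j−1} for 1 ≤ j ≤ n+1 and β_j² = k_{j−1} γ̃_j y_2 for 1 ≤ j ≤ n. Define the sequence Δ_0 = 1, Δ_1 = α_1, and Δ_j = α_j Δ_{j−1} − β_{j−1}² Δ_{j−2} for 2 ≤ j ≤ n+1. Then Δ_j = (−1)^j k_0⋯k_{j−1} y_2^j for 1 ≤ j ≤ n,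 and Δ_{n+1} = 0. -/
/-! The value `D_j = (-1)^j k_0 ⋯ k_{j-1} y^j` satisfies the three-term recurrence identically:
since `D_{j+1} = -k_j y D_j`, the term `β_{j+1} D_j = -t_{j+1} D_{j+1}` cancels the `t`-part of
`α_{j+2} D_{j+1}`, leaving `-k_{j+1} y D_{j+1} = D_{j+2}`; the initial value works because
`t_0 = 0 · γ_0 = 0`. Hence `Δ = D` up to `n + 1`, and `Δ_{n+1}` vanishes through the factor
`k_n = 0`. -/

open Finset

variable {R : Type*} [CommRing R]

def signedProdPow (k : ℕ → R) (y : R) (j : ℕ) : R :=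
  (-1) ^ j * (∏ i ∈ range j, k i) * y ^ j

theorem signedProdPow_zero (k : ℕ → R) (y : R) : signedProdPow k y 0 = 1 := by
  simp [signedProdPow]

theorem signedProdPow_one (k : ℕ → R) (y : R) : signedProdPow k y 1 = -(k 0 * y) := by
  simp [signedProdPow]

theorem signedProdPow_eq_zero {k : ℕ → R} (y : R) {i j : ℕ} (hij : i < j) (hk : k i = 0) :
    signedProdPow k y j = 0 := by
  simp [signedProdPow, prod_eq_zero (mem_range.2 hij) hk]

theorem signedProdPow_add_two (k t : ℕ → R) (y : R) (j : ℕ) :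
    -(k (j + 1) * y + t (j + 1)) * signedProdPow k y (j + 1)
        - k j * t (j + 1) * y * signedProdPow k y j = signedProdPow k y (j + 2) := by
  simp only [signedProdPow, prod_range_succ, pow_succ]
  ring

theorem eq_signedProdPow_of_recurrence (N : ℕ) (k t α β Δ : ℕ → R) (y : R) (ht0 : t 0 = 0)
    (hα : ∀ j < N, α (j + 1) = -(k j * y + t j))
    (hβ : ∀ j, j + 2 ≤ N → β (j + 1) = k j * t (j + 1) * y)
    (hΔ0 : Δ 0 = 1) (hΔ1 : Δ 1 = α 1)
    (hΔ : ∀ j, j + 2 ≤ N → Δ (j + 2) = α (j + 2) * Δ (j + 1) - β (j + 1) * Δ j) :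
    ∀ j ≤ N, Δ j = signedProdPow k y j := by
  intro j
  induction j using Nat.twoStepInduction with
  | zero => simp [hΔ0, signedProdPow_zero]
  | one =>
    intro h1
    rw [hΔ1, hα 0 h1, ht0, signedProdPow_one, add_zero]
  | more m ihm ihm1 =>
    intro hm
    rw [hΔ m hm, hα (m + 1) hm, hβ m hm, ihm (by omega), ihm1 (by omega),
      signedProdPow_add_two]

theorem stmt_6_general (n : ℕ) (kk γ : ℕ → ℝ)
    (hkn : kk n = 0)
    (tγ : ℕ → ℝ) (htγ : ∀ j, tγ j = (j : ℝ) * γ j)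
    (y2 : ℝ)
    (α : ℕ → ℝ) (hα : ∀ j, 1 ≤ j → j ≤ n + 1 → α j = -(kk (j - 1) * y2 + tγ (j - 1)))
    (β2 : ℕ → ℝ) (hβ : ∀ j, 1 ≤ j → j ≤ n → β2 j = kk (j - 1) * tγ j * y2)
    (Δ : ℕ → ℝ) (hΔ0 : Δ 0 = 1) (hΔ1 : Δ 1 = α 1)
    (hΔ : ∀ j, 2 ≤ j → j ≤ n + 1 → Δ j = α j * Δ (j - 1) - β2 (j - 1) * Δ (j - 2)) :
    (∀ j, 1 ≤ j → j ≤ n →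
        Δ j = (-1 : ℝ) ^ j * (∏ i ∈ Finset.range j, kk i) * y2 ^ j)
    ∧ Δ (n + 1) = 0 := by
  have hΔ_eq : ∀ j ≤ n + 1, Δ j = signedProdPow kk y2 j :=
    eq_signedProdPow_of_recurrence (n + 1) kk tγ α β2 Δ y2 (by simp [htγ])
      (fun j hj => by simpa using hα (j + 1) (by omega) (by omega))
      (fun j hj => by simpa using hβ (j + 1) (by omega) (by omega))
      hΔ0 hΔ1 (fun j hj => by simpa using hΔ (j + 2) (by omega) hj)
  refine ⟨fun j _ hj => hΔ_eq j (by omega), ?_⟩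
  rw [hΔ_eq (n + 1) le_rfl, signedProdPow_eq_zero y2 (Nat.lt_succ_self n) hkn]

/-- The Sturm sequence `Δ_j` (values at `λ = 0` of leading principal minors of
the symmetric tridiagonal matrix `P`) satisfies
`Δ_j = (−1)^j k_0 ⋯ k_{j−1} y₂^j` for `1 ≤ j ≤ n`, and `Δ_{n+1} = 0`. -/
theorem stmt_6 (n : ℕ) (hn : 1 ≤ n) (kk γ : ℕ → ℝ)
    (hkk : ∀ j < n, 0 < kk j) (hkn : kk n = 0)
    (hγ : ∀ j ∈ Finset.Icc 1 n, 0 < γ j)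
    (tγ : ℕ → ℝ) (htγ : ∀ j, tγ j = (j : ℝ) * γ j)
    (y2 : ℝ) (hy2 : 0 < y2)
    (α : ℕ → ℝ) (hα : ∀ j, 1 ≤ j → j ≤ n + 1 → α j = -(kk (j - 1) * y2 + tγ (j - 1)))
    (β2 : ℕ → ℝ) (hβ : ∀ j, 1 ≤ j → j ≤ n → β2 j = kk (j - 1) * tγ j * y2)
    (Δ : ℕ → ℝ) (hΔ0 : Δ 0 = 1) (hΔ1 : Δ 1 = α 1)
    (hΔ : ∀ j, 2 ≤ j → j ≤ n + 1 → Δ j = α j * Δ (j - 1) - β2 (j - 1) * Δ (j - 2)) :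
    (∀ j, 1 ≤ j → j ≤ n →
        Δ j = (-1 : ℝ) ^ j * (∏ i ∈ Finset.range j, kk i) * y2 ^ j)
    ∧ Δ (n + 1) = 0 :=
  stmt_6_general n kk γ hkn tγ htγ y2 α hα β2 hβ Δ hΔ0 hΔ1 hΔ
end

section
/- Let n ≥ 1, let k_0, …, k_{n−1} > 0, γ_1, …, γ_n > 0, y_2 > 0, set γ̃_j = jγ_j for 1 ≤ j ≤ n, γ̃_0 = 0 and k_n = 0, and let A be the (n+1)×(n+1) real tridiagonal matrix with diagonal entries A_{j,j} = −k_{j−1} y_2 − γ̃_{j−1} (1 ≤ j ≤ n+1), subdiagonal entries A_{j+1,j} = k_{j−1} y_2 and superdiagonal entries A_{j,j+1} = γ̃_j (1 ≤ j ≤ n). Then all eigenvalues of A are real and simple (every root of the characteristic polynomial of A over ℂ is a real number and has multiplicity one), 0 is an eigenvalue of A, and every eigenvalue λ of A satisfies λ ≤ 0. -/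
/-!
The matrix is tridiagonal and the products of its opposite off-diagonal entries are positive, so a
positive diagonal similarity turns it into a symmetric tridiagonal matrix. Hence its eigenvalues are
real, and they are simple because an eigenvector of a tridiagonal matrix with nonzero superdiagonal
is determined by its first entry. Its columns sum to zero and its off-diagonal entries are
nonnegative, so the all-ones vector is a left null vector, and Gershgorin's theorem for the
transpose puts the spectrum in the closed left half-plane.
-/

open Polynomial Finset Matrix

theorem Polynomial.im_eq_zero_and_rootMultiplicity_eq_one_of_isRoot_map_prod {ι : Type*}
    [Fintype ι] {e : ι → ℝ} (he : Function.Injective e) {μ : ℂ}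
    (hμ : ((∏ k, (X - C (e k))).map (algebraMap ℝ ℂ)).IsRoot μ) :
    μ.im = 0 ∧ rootMultiplicity μ ((∏ k, (X - C (e k))).map (algebraMap ℝ ℂ)) = 1 := by
  have hmap : (∏ k, (X - C (e k))).map (algebraMap ℝ ℂ) = ∏ k, (X - C (e k : ℂ)) := by
    simp [Polynomial.map_prod]
  rw [hmap] at hμ ⊢
  obtain ⟨k, -, rfl⟩ : ∃ k ∈ univ, μ = e k := by
    simpa [eval_prod, prod_eq_zero_iff, sub_eq_zero] using hμ
  have hsep := separable_prod_X_sub_C_iff.2 (Complex.ofReal_injective.comp he)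
  exact ⟨Complex.ofReal_im _, le_antisymm (rootMultiplicity_le_one_of_separable hsep _)
    ((rootMultiplicity_pos (monic_prod_X_sub_C _ _).ne_zero).2 hμ)⟩

namespace Matrix

theorem charpoly_diagonal_mul_mul_diagonal_inv {n K : Type*} [Fintype n] [DecidableEq n] [Field K]
    (d : n → K) (hd : ∀ i, d i ≠ 0) (M : Matrix n n K) :
    (diagonal d * M * diagonal fun i => (d i)⁻¹).charpoly = M.charpoly := by
  rw [charpoly_mul_comm, ← mul_assoc, diagonal_mul_diagonal]
  simp [hd]

theorem IsHermitian.eigenvalues_injective {𝕜 n : Type*} [RCLike 𝕜] [Fintype n] [DecidableEq n]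
    {S : Matrix n n 𝕜} (hS : S.IsHermitian) (k : n)
    (h : ∀ (μ : ℝ) (x : n → 𝕜), S *ᵥ x = μ • x → x k = 0 → x = 0) :
    Function.Injective hS.eigenvalues := by
  intro i j hij
  by_contra hne
  set u := hS.eigenvectorBasis
  set w := u j k • u i - u i k • u j
  have hw : S *ᵥ ⇑w = hS.eigenvalues i • ⇑w := by
    simp only [w, WithLp.ofLp_sub, WithLp.ofLp_smul, mulVec_sub, mulVec_smul, u,
      hS.mulVec_eigenvectorBasis, hij, smul_sub, smul_comm (hS.eigenvalues j)]
  have hw₀ : w = 0 := WithLp.ofLp_injective 2 (h _ _ hw (by simp [w, mul_comm]))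
  have hui : u i k = 0 := by
    simpa [w, inner_sub_right, inner_smul_right, orthonormal_iff_ite.1 u.orthonormal,
      Ne.symm hne] using congrArg (inner 𝕜 (u j)) hw₀
  exact u.orthonormal.ne_zero i (WithLp.ofLp_injective 2 (h _ _ (hS.mulVec_eigenvectorBasis i) hui))

section Compartmental

variable {n : Type*} [Fintype n] [DecidableEq n] {A : Matrix n n ℝ}

theorem re_le_zero_of_isRoot_charpoly_map (hoff : ∀ i j, i ≠ j → 0 ≤ A i j)
    (hcol : ∀ j, ∑ i, A i j = 0) {μ : ℂ} (hμ : (A.map ((↑) : ℝ → ℂ)).charpoly.IsRoot μ) :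
    μ.re ≤ 0 := by
  set M : Matrix n n ℂ := (A.map ((↑) : ℝ → ℂ))ᵀ
  have hM : Module.End.HasEigenvalue (toLin' M) μ := by
    rwa [Module.End.hasEigenvalue_iff_isRoot_charpoly, charpoly_toLin', charpoly_transpose]
  obtain ⟨k, hk⟩ := eigenvalue_mem_ball hM
  have hradius : ∑ j ∈ univ.erase k, ‖M k j‖ = -A k k := by
    have hcolk : ∑ j ∈ univ.erase k, A j k = -A k k := by
      have := hcol k
      rw [← add_sum_erase _ _ (mem_univ k)] at this
      linarith
    rw [← hcolk]
    refine sum_congr rfl fun j hj => ?_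
    simp [M, abs_of_nonneg (hoff j k (ne_of_mem_erase hj))]
  rw [hradius, Metric.mem_closedBall, Complex.dist_eq] at hk
  have := (Complex.re_le_norm (μ - M k k)).trans hk
  simp only [M, transpose_apply, map_apply, Complex.sub_re, Complex.ofReal_re] at this
  linarith

theorem isRoot_charpoly_zero_of_sum_col_eq_zero [Nonempty n] (hcol : ∀ j, ∑ i, A i j = 0) :
    A.charpoly.IsRoot 0 := by
  have hdet : A.det = 0 := by
    rw [← exists_vecMul_eq_zero_iff]
    refine ⟨fun _ => 1, Function.ne_iff.2 ⟨Classical.arbitrary n, one_ne_zero⟩, ?_⟩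
    ext j
    simpa [vecMul, dotProduct] using hcol j
  have h := det_eq_sign_charpoly_coeff A
  rw [hdet, eq_comm, mul_eq_zero] at h
  rw [IsRoot, ← coeff_zero_eq_eval_zero]
  exact h.resolve_left (pow_ne_zero _ (neg_ne_zero.2 one_ne_zero))

end Compartmental

def tridiagonal {R : Type*} [Zero R] (m : ℕ) (a b c : ℕ → R) : Matrix (Fin m) (Fin m) R :=
  of fun i j =>
    if (i : ℕ) = j then a i else if (j : ℕ) = i + 1 then b j else if (i : ℕ) = j + 1 then c j else 0

section Tridiagonal

variable {R : Type*} {m : ℕ} {a b c : ℕ → R}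

theorem tridiagonal_apply_eq_zero [Zero R] {i j : Fin m} (h : (i : ℕ) + 1 < j ∨ (j : ℕ) + 1 < i) :
    tridiagonal m a b c i j = 0 := by
  simp only [tridiagonal, of_apply]
  split_ifs <;> first | rfl | omega

theorem tridiagonal_apply_nonneg_of_ne [Zero R] [Preorder R] (hb : ∀ j, 0 < j → j < m → 0 ≤ b j)
    (hc : ∀ j, j + 1 < m → 0 ≤ c j) {i j : Fin m} (hij : i ≠ j) : 0 ≤ tridiagonal m a b c i j := by
  simp only [tridiagonal, of_apply, if_neg (Fin.val_injective.ne hij)]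
  split_ifs
  · exact hb j (by omega) j.isLt
  · exact hc j (by omega)
  · rfl

theorem tridiagonal_congr [Zero R] {b' c' : ℕ → R} (hb : ∀ j, 0 < j → j < m → b j = b' j)
    (hc : ∀ j, j + 1 < m → c j = c' j) : tridiagonal m a b c = tridiagonal m a b' c' := by
  ext i j
  simp only [tridiagonal, of_apply]
  split_ifs <;> first | rfl | (apply hb <;> omega) | (apply hc; omega)

theorem isHermitian_tridiagonal [Zero R] [Star R] [TrivialStar R] (e : ℕ → R) :
    (tridiagonal m a (fun j => e (j - 1)) e).IsHermitian := by
  rw [isHermitian_iff_isSymm]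
  ext i j
  simp only [transpose_apply, tridiagonal, of_apply]
  split_ifs <;> first | rfl | omega | exact congrArg _ (by omega)

theorem sum_tridiagonal_apply [AddCommMonoid R] (j : Fin m) :
    ∑ i, tridiagonal m a b c i j =
      a j + (if (j : ℕ) = 0 then 0 else b j) + (if (j : ℕ) + 1 < m then c j else 0) := by
  have hsplit : ∀ i : ℕ, (if i = j then a i else if (j : ℕ) = i + 1 then b j
      else if i = j + 1 then c j else 0) =
      (if i = j then a j else 0) + (if (j : ℕ) = i + 1 then b j else 0) +
        (if i = j + 1 then c j else 0) := by
    intro i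
    split_ifs <;> first | omega | simp_all
  simp only [tridiagonal, of_apply]
  rw [Fin.sum_univ_eq_sum_range (fun i => if i = j then a i else if (j : ℕ) = i + 1 then b j
      else if i = j + 1 then c j else 0), sum_congr rfl fun i _ => hsplit i, sum_add_distrib,
    sum_add_distrib, sum_ite_eq', sum_ite_eq', if_pos (mem_range.2 j.isLt)]
  congr 2
  · obtain ⟨_ | k, hk⟩ := j <;> simp [eq_comm]; omega
  · simp

theorem sum_tridiagonal_apply_of_boundary [AddCommMonoid R] (hb : b 0 = 0) (hc : c (m - 1) = 0)
    (j : Fin m) : ∑ i, tridiagonal m a b c i j = a j + b j + c j := by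
  rw [sum_tridiagonal_apply]
  congr 2
  · split_ifs with h
    · rw [h, hb]
    · rfl
  · split_ifs with h
    · rfl
    · rw [show (j : ℕ) = m - 1 by omega, hc]

theorem eq_zero_of_tridiagonal_mulVec_eq_smul [CommRing R] [IsDomain R] [NeZero m]
    (hb : ∀ j, 0 < j → j < m → b j ≠ 0) {μ : R} {x : Fin m → R}
    (hx : tridiagonal m a b c *ᵥ x = μ • x) (h₀ : x 0 = 0) : x = 0 := by
  suffices ∀ p, ∀ l : Fin m, (l : ℕ) ≤ p → x l = 0 from funext fun l => this l l le_rfl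
  intro p
  induction p with
  | zero => intro l hl; rwa [show l = 0 from Fin.ext (by simpa using hl)]
  | succ p ih =>
    intro l hl
    rcases hl.lt_or_eq with hl | hl
    · exact ih l (by omega)
    have hp₁ : p + 1 < m := hl ▸ l.isLt
    obtain rfl : l = ⟨p + 1, hp₁⟩ := Fin.ext hl
    have hp : p < m := by omega
    have hrow := congrFun hx ⟨p, hp⟩
    rw [mulVec, dotProduct, sum_eq_single ⟨p + 1, hp₁⟩] at hrow
    · have hbp : b (p + 1) ≠ 0 := hb (p + 1) p.succ_pos hp₁
      simpa [ih ⟨p, hp⟩ le_rfl, tridiagonal, hbp] using hrow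
    · intro k _ hk
      rcases le_or_gt (k : ℕ) p with hkp | hkp
      · rw [ih k hkp, mul_zero]
      · rw [tridiagonal_apply_eq_zero (by simp only; omega), zero_mul]
    · simp

theorem diagonal_mul_tridiagonal_mul_diagonal [Field R] (d : ℕ → R) (hd : ∀ i < m, d i ≠ 0) :
    diagonal (fun i : Fin m => d i) * tridiagonal m a b c * diagonal (fun i : Fin m => (d i)⁻¹) =
      tridiagonal m a (fun j => d (j - 1) * b j / d j) (fun j => d (j + 1) * c j / d j) := by
  ext i j
  have hi := hd i i.isLt
  simp only [diagonal_mul, mul_diagonal, tridiagonal, of_apply]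
  split_ifs with h₁ h₂ h₃ <;> try simp
  · obtain rfl := Fin.ext h₁
    field_simp
  · rw [h₂, Nat.add_sub_cancel]
    ring
  · rw [h₃]
    ring

end Tridiagonal

section RealTridiagonal

variable {m : ℕ} {a b c : ℕ → ℝ}

theorem exists_charpoly_tridiagonal_eq_symm (h : ∀ j, j + 1 < m → 0 < b (j + 1) * c j) :
    ∃ e : ℕ → ℝ, (∀ j, j + 1 < m → e j ≠ 0) ∧
      (tridiagonal m a b c).charpoly = (tridiagonal m a (fun j => e (j - 1)) e).charpoly := by
  -- conjugating by `diagonal d` with `d (k + 1) = d k * √(b (k + 1) / c k)` equalises the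
  -- entries at `(k, k + 1)` and `(k + 1, k)`
  set r : ℕ → ℝ := fun i => √(b (i + 1) / c i)
  have hr : ∀ i, i + 1 < m → 0 < r i ∧ r i ^ 2 * c i = b (i + 1) := fun i hi => by
    have hbc : 0 < b (i + 1) / c i := div_pos_iff.2 (mul_pos_iff.1 (h i hi))
    refine ⟨Real.sqrt_pos.2 hbc, ?_⟩
    rw [Real.sq_sqrt hbc.le, div_mul_cancel₀ _ (right_ne_zero_of_mul (h i hi).ne')]
  set d : ℕ → ℝ := fun k => ∏ i ∈ range k, r i
  have hd : ∀ k < m, 0 < d k := fun k hk => prod_pos fun i hi => (hr i (by grind)).1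
  refine ⟨fun j => d (j + 1) * c j / d j, fun j hj => ?_, ?_⟩
  · exact div_ne_zero (mul_ne_zero (hd _ hj).ne' (right_ne_zero_of_mul (h j hj).ne'))
      (hd j (by omega)).ne'
  rw [← charpoly_diagonal_mul_mul_diagonal_inv (fun i : Fin m => d i) (fun i => (hd i i.isLt).ne'),
    diagonal_mul_tridiagonal_mul_diagonal _ (fun i hi => (hd i hi).ne')]
  congr 1
  refine tridiagonal_congr (fun j hj hjm => ?_) fun _ _ => rfl
  obtain ⟨k, rfl⟩ : ∃ k, j = k + 1 := ⟨j - 1, by omega⟩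
  obtain ⟨hrk, hrk_sq⟩ := hr k hjm
  have hdk := hd k (by omega)
  simp only [Nat.add_sub_cancel, d, prod_range_succ] at hdk ⊢
  field_simp
  rw [← hrk_sq]

theorem exists_injective_charpoly_tridiagonal_eq_prod [NeZero m]
    (h : ∀ j, j + 1 < m → 0 < b (j + 1) * c j) :
    ∃ e : Fin m → ℝ, Function.Injective e ∧
      (tridiagonal m a b c).charpoly = ∏ k, (X - C (e k)) := by
  obtain ⟨e, he, hcp⟩ := exists_charpoly_tridiagonal_eq_symm (a := a) h
  have hS := isHermitian_tridiagonal (m := m) (a := a) e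
  refine ⟨hS.eigenvalues, hS.eigenvalues_injective 0 fun μ x hx h₀ => ?_, ?_⟩
  · exact eq_zero_of_tridiagonal_mulVec_eq_smul (fun j hj hjm => he (j - 1) (by omega)) hx h₀
  · rw [hcp, hS.charpoly_eq]
    simp

end RealTridiagonal

end Matrix

theorem stmt_7_general (n : ℕ) (kk γ : ℕ → ℝ)
    (hkk : ∀ j < n, 0 < kk j) (hkn : kk n = 0)
    (hγ : ∀ j ∈ Finset.Icc 1 n, 0 < γ j)
    (tγ : ℕ → ℝ) (htγ : ∀ j, tγ j = (j : ℝ) * γ j)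
    (y2 : ℝ) (hy2 : 0 < y2)
    (A : Matrix (Fin (n + 1)) (Fin (n + 1)) ℝ)
    (hA : ∀ i l : Fin (n + 1), A i l =
      if (i : ℕ) = (l : ℕ) then -(kk (i : ℕ) * y2 + tγ (i : ℕ))
      else if (l : ℕ) = (i : ℕ) + 1 then tγ (l : ℕ)
      else if (i : ℕ) = (l : ℕ) + 1 then kk (l : ℕ) * y2
      else 0) :
    (∀ μ : ℂ, (Matrix.charpoly (A.map (fun t : ℝ => (t : ℂ)))).IsRoot μ →
        μ.im = 0 ∧ μ.re ≤ 0 ∧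
        Polynomial.rootMultiplicity μ (Matrix.charpoly (A.map (fun t : ℝ => (t : ℂ)))) = 1)
    ∧ (Matrix.charpoly A).IsRoot 0 := by
  have htγ_pos : ∀ j, 0 < j → j ≤ n → 0 < tγ j := fun j h₀ hj =>
    htγ j ▸ mul_pos (Nat.cast_pos.2 h₀) (hγ j (mem_Icc.2 ⟨h₀, hj⟩))
  have hky_pos : ∀ j, j + 1 < n + 1 → 0 < kk j * y2 := fun j hj => mul_pos (hkk j (by omega)) hy2
  have hA' : A = tridiagonal (n + 1) (fun i => -(kk i * y2 + tγ i)) tγ (fun j => kk j * y2) := by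
    ext i l
    rw [hA]
    rfl
  have hoff : ∀ i l, i ≠ l → 0 ≤ A i l := fun i l hil => hA' ▸
    tridiagonal_apply_nonneg_of_ne (fun j h₀ hj => (htγ_pos j h₀ (by omega)).le)
      (fun j hj => (hky_pos j hj).le) hil
  have hcol : ∀ l, ∑ i, A i l = 0 := fun l => by
    rw [hA', sum_tridiagonal_apply_of_boundary (by simp [htγ]) (by simp [hkn])]
    ring
  obtain ⟨e, he, hcp⟩ := exists_injective_charpoly_tridiagonal_eq_prod (m := n + 1)
    (a := fun i => -(kk i * y2 + tγ i)) fun j hj => mul_pos (htγ_pos _ j.succ_pos (by omega)) (hky_pos j hj)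
  have hcpℂ : (A.map fun t : ℝ => (t : ℂ)).charpoly =
      (∏ k, (X - C (e k))).map (algebraMap ℝ ℂ) := by
    rw [← hcp, ← hA']
    exact charpoly_map A (algebraMap ℝ ℂ)
  refine ⟨fun μ hμ => ?_, isRoot_charpoly_zero_of_sum_col_eq_zero hcol⟩
  have hre := re_le_zero_of_isRoot_charpoly_map hoff hcol hμ
  rw [hcpℂ] at hμ ⊢
  obtain ⟨him, hmult⟩ := im_eq_zero_and_rootMultiplicity_eq_one_of_isRoot_map_prod he hμ
  exact ⟨him, hre, hmult⟩

/-- The tridiagonal occupancy matrix `A` has only real simple eigenvalues,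
`0` is an eigenvalue, and all eigenvalues are `≤ 0`. -/
theorem stmt_7 (n : ℕ) (hn : 1 ≤ n) (kk γ : ℕ → ℝ)
    (hkk : ∀ j < n, 0 < kk j) (hkn : kk n = 0)
    (hγ : ∀ j ∈ Finset.Icc 1 n, 0 < γ j)
    (tγ : ℕ → ℝ) (htγ : ∀ j, tγ j = (j : ℝ) * γ j)
    (y2 : ℝ) (hy2 : 0 < y2)
    (A : Matrix (Fin (n + 1)) (Fin (n + 1)) ℝ)
    (hA : ∀ i l : Fin (n + 1), A i l =
      if (i : ℕ) = (l : ℕ) then -(kk (i : ℕ) * y2 + tγ (i : ℕ))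
      else if (l : ℕ) = (i : ℕ) + 1 then tγ (l : ℕ)
      else if (i : ℕ) = (l : ℕ) + 1 then kk (l : ℕ) * y2
      else 0) :
    (∀ μ : ℂ, (Matrix.charpoly (A.map (fun t : ℝ => (t : ℂ)))).IsRoot μ →
        μ.im = 0 ∧ μ.re ≤ 0 ∧
        Polynomial.rootMultiplicity μ (Matrix.charpoly (A.map (fun t : ℝ => (t : ℂ)))) = 1)
    ∧ (Matrix.charpoly A).IsRoot 0 :=
  stmt_7_general n kk γ hkk hkn hγ tγ htγ y2 hy2 A hA
end

section
/- Let γ_1, θ, k, δ_1, δ_2, ε_1, ε_2 be positive real numbers, set ε = ε_2/ε_1 and x̄_0 = γ_1/(1+γ_1), and define c_0 = ε ε_2 δ_1 (γ_1+1), c_1 = ε(γ_1+1)(ε_2(2k+δ_1)+1) + ε_2(2kθx̄_0 + δ_1(1+θx̄_0)), c_2 = ε(γ_1+1) + ε_2(2k+δ_1) + θx̄_0 + 1, and a_1 = ε_2δ_2 + c_2, a_2 = ε_2δ_2 c_2 + c_1, a_3 = ε_2δ_2 c_1 + c_0, a_4 = ε_2δ_2 c_0 + 2ε ε_2² δ_1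 δ_2. Then every complex root λ of the polynomial W_1(λ) = λ⁴ + a_1 λ³ + a_2 λ² + a_3 λ + a_4 satisfies Re(λ) < 0. -/
/-!
Routh–Hurwitz for quartics: if `z⁴ + a z³ + b z² + c z + d` has positive coefficients and positive
third Hurwitz determinant `abc - c² - a²d`, all its roots lie in the open left half-plane. `W₁` has
the shape `(z + s) P(z) + K` with `s = ε₂δ₂`, `P(z) = z³ + c₂z² + c₁z + c₀` and
`K = 2εε₂²δ₁δ₂`, and for such a quartic the Hurwitz determinant factors as
`(c₁c₂ - c₀) P(s) - (s + c₂)² K`. Since `K < 2sc₀`, it suffices that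
`c₁c₂ - c₀ ≥ 4c₀` and `(c₁c₂ - c₀) c₁ ≥ 2c₀c₂²`, which hold for the Hes1 coefficients by AM–GM
and by a direct expansion with nonnegative coefficients.
-/

open Complex

theorem re_neg_of_quartic_eq_zero {a b c d : ℝ} (ha : 0 < a) (hb : 0 < b) (hc : 0 < c)
    (hd : 0 < d) (hΔ : a ^ 2 * d + c ^ 2 < a * b * c) {z : ℂ}
    (hz : z ^ 4 + (a : ℂ) * z ^ 3 + (b : ℂ) * z ^ 2 + (c : ℂ) * z + (d : ℂ) = 0) :
    z.re < 0 := by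
  by_contra! hx
  set x := z.re
  set y := z.im
  -- Taylor coefficients at `x`: the real and imaginary parts of the quartic at `x + iy` are
  -- `p - p₂y² + y⁴` and `y(p₁ - p₃y²)`
  set p := x ^ 4 + a * x ^ 3 + b * x ^ 2 + c * x + d
  set p₁ := 4 * x ^ 3 + 3 * a * x ^ 2 + 2 * b * x + c
  set p₂ := 6 * x ^ 2 + 3 * a * x + b
  set p₃ := 4 * x + a
  obtain ⟨hre, him⟩ := Complex.ext_iff.mp hz
  simp only [pow_succ, pow_zero, one_mul, add_re, add_im, mul_re, mul_im, ofReal_re, ofReal_im,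
    zero_re, zero_im, zero_mul, sub_zero, add_zero] at hre him
  have hre' : p - p₂ * y ^ 2 + y ^ 4 = 0 := by linear_combination hre
  have him' : y * (p₁ - p₃ * y ^ 2) = 0 := by linear_combination him
  rcases mul_eq_zero.mp him' with hy | hy
  · have : 0 < p := by positivity
    rw [hy] at hre'
    linarith
  · have hp₃ : 0 < p₃ := by positivity
    -- eliminating `y²` leaves a polynomial equation in `x`, whose left side times `-a²` is the
    -- Hurwitz determinant times `p₃²` plus a polynomial with nonnegative coefficients
    have hres : p₁ ^ 2 - p₂ * p₁ * p₃ + p * p₃ ^ 2 = 0 := by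
      linear_combination p₃ ^ 2 * hre' + (p₁ + p₃ * y ^ 2 - p₂ * p₃) * hy
    have hΔ' : 0 < a * b * c - c ^ 2 - a ^ 2 * d := by linarith
    have key : (a * b * c - c ^ 2 - a ^ 2 * d) * p₃ ^ 2
        + ((4 * (a * b - 2 * c) ^ 2 + 4 * a ^ 3 * c + 8 * a ^ 4 * b) * x ^ 2
          + (2 * a * (a * b - 2 * c) ^ 2 + 2 * a ^ 4 * c) * x
          + a ^ 2 * (64 * x ^ 6 + 96 * a * x ^ 5 + (48 * a ^ 2 + 32 * b) * x ^ 4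
            + (8 * a ^ 3 + 32 * a * b) * x ^ 3)) = 0 := by
      linear_combination (-a ^ 2) * hres
    generalize a * b * c - c ^ 2 - a ^ 2 * d = Δ at hΔ' key
    exact (by positivity : 0 < Δ * p₃ ^ 2 + _).ne' key

theorem re_neg_of_shift_mul_cubic_add_eq_zero {s c₀ c₁ c₂ K : ℝ} (hs : 0 < s) (hc₀ : 0 < c₀)
    (hc₁ : 0 < c₁) (hc₂ : 0 < c₂) (hK : 0 ≤ K)
    (hΔ : (s + c₂) ^ 2 * K < (c₁ * c₂ - c₀) * (s ^ 3 + c₂ * s ^ 2 + c₁ * s + c₀)) {z : ℂ}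
    (hz : z ^ 4 + ((s + c₂ : ℝ) : ℂ) * z ^ 3 + ((s * c₂ + c₁ : ℝ) : ℂ) * z ^ 2
      + ((s * c₁ + c₀ : ℝ) : ℂ) * z + ((s * c₀ + K : ℝ) : ℂ) = 0) :
    z.re < 0 :=
  re_neg_of_quartic_eq_zero (by positivity) (by positivity) (by positivity) (by positivity)
    (by linear_combination hΔ) hz

theorem two_mul_mul_sq_lt_of_le {s c₀ c₁ c₂ : ℝ} (hs : 0 < s) (hc₀ : 0 < c₀) (hc₂ : 0 < c₂)
    (h₀ : 4 * c₀ ≤ c₁ * c₂ - c₀) (h₁ : 2 * c₀ * c₂ ^ 2 ≤ (c₁ * c₂ - c₀) * c₁) :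
    2 * s * c₀ * (s + c₂) ^ 2 < (c₁ * c₂ - c₀) * (s ^ 3 + c₂ * s ^ 2 + c₁ * s + c₀) := by
  nlinarith [mul_le_mul_of_nonneg_right h₀ (by positivity : (0 : ℝ) ≤ s ^ 3 + c₂ * s ^ 2),
    mul_le_mul_of_nonneg_right h₁ hs.le, mul_pos (by linarith : 0 < c₁ * c₂ - c₀) hc₀,
    mul_pos hc₀ (pow_pos hs 3)]

/-! In the Hes1 coefficients below, `E = ε(γ₁ + 1)`, `u = ε₂(2k + δ₁)`, `w = ε₂δ₁`, `t = θx̄₀`. -/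

section Hes1

variable {E u w t : ℝ}

theorem hes1_four_mul_le (hE : 0 ≤ E) (hw : 0 ≤ w) (hwu : w ≤ u) (ht : 0 ≤ t) :
    4 * (E * w) ≤ (E * (u + 1) + u * t + w) * (E + u + t + 1) - E * w := by
  obtain ⟨d, hd, rfl⟩ : ∃ d, 0 ≤ d ∧ u = w + d := ⟨u - w, by linarith, by ring⟩
  nlinarith [mul_nonneg hE (sq_nonneg (w - 1)), mul_nonneg hE hw, mul_nonneg hd ht,
    mul_nonneg hE hd, mul_nonneg hE ht, mul_nonneg hw ht, mul_nonneg hw hd]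

theorem hes1_two_mul_sq_le (hE : 0 ≤ E) (hw : 0 ≤ w) (hwu : w ≤ u) (ht : 0 ≤ t) :
    2 * (E * w) * (E + u + t + 1) ^ 2 ≤
      ((E * (u + 1) + u * t + w) * (E + u + t + 1) - E * w) * (E * (u + 1) + u * t + w) := by
  obtain ⟨d, hd, rfl⟩ : ∃ d, 0 ≤ d ∧ u = w + d := ⟨u - w, by linarith, by ring⟩
  rw [← sub_nonneg]
  ring_nf
  positivity

end Hes1

/-- Every complex root of the characteristic polynomial `W₁` of the Jacobian
of the full Hes1 model with one binding site at its positive steady state has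
negative real part (local asymptotic stability). -/
theorem stmt_8 (γ1 θ kp δ1 δ2 ε1 ε2 : ℝ)
    (hγ1 : 0 < γ1) (hθ : 0 < θ) (hkp : 0 < kp) (hδ1 : 0 < δ1) (hδ2 : 0 < δ2)
    (hε1 : 0 < ε1) (hε2 : 0 < ε2)
    (ε : ℝ) (hε : ε = ε2 / ε1)
    (x0 : ℝ) (hx0 : x0 = γ1 / (1 + γ1))
    (c0 c1 c2 a1 a2 a3 a4 : ℝ)
    (hc0 : c0 = ε * ε2 * δ1 * (γ1 + 1))
    (hc1 : c1 = ε * (γ1 + 1) * (ε2 * (2 * kp + δ1) + 1)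
        + ε2 * (2 * kp * θ * x0 + δ1 * (1 + θ * x0)))
    (hc2 : c2 = ε * (γ1 + 1) + ε2 * (2 * kp + δ1) + θ * x0 + 1)
    (ha1 : a1 = ε2 * δ2 + c2)
    (ha2 : a2 = ε2 * δ2 * c2 + c1)
    (ha3 : a3 = ε2 * δ2 * c1 + c0)
    (ha4 : a4 = ε2 * δ2 * c0 + 2 * ε * ε2 ^ 2 * δ1 * δ2) :
    ∀ lam : ℂ, lam ^ 4 + (a1 : ℂ) * lam ^ 3 + (a2 : ℂ) * lam ^ 2
        + (a3 : ℂ) * lam + (a4 : ℂ) = 0 → lam.re < 0 := by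
  intro lam hlam
  subst ha1 ha2 ha3 ha4
  have hεpos : 0 < ε := by rw [hε]; positivity
  have hE : 0 < ε * (γ1 + 1) := by positivity
  have hw : 0 < ε2 * δ1 := by positivity
  have hwu : ε2 * δ1 ≤ ε2 * (2 * kp + δ1) := by nlinarith
  have ht : 0 ≤ θ * x0 := by rw [hx0]; positivity
  have hc0' : c0 = ε * (γ1 + 1) * (ε2 * δ1) := by rw [hc0]; ring
  have hc1' : c1 = ε * (γ1 + 1) * (ε2 * (2 * kp + δ1) + 1) + ε2 * (2 * kp + δ1) * (θ * x0)
      + ε2 * δ1 := by rw [hc1]; ring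
  have hK : 2 * ε * ε2 ^ 2 * δ1 * δ2 < 2 * (ε2 * δ2) * c0 := by
    have : 0 < ε * ε2 ^ 2 * δ1 * δ2 * γ1 := by positivity
    rw [hc0]
    linear_combination 2 * this
  have hc₀ : 0 < c0 := by rw [hc0']; positivity
  have hc₂ : 0 < c2 := by rw [hc2]; positivity
  refine re_neg_of_shift_mul_cubic_add_eq_zero (by positivity) hc₀ (by rw [hc1']; positivity) hc₂
    (by positivity) ?_ hlam
  calc (ε2 * δ2 + c2) ^ 2 * (2 * ε * ε2 ^ 2 * δ1 * δ2)
      ≤ 2 * (ε2 * δ2) * c0 * (ε2 * δ2 + c2) ^ 2 := by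
        rw [mul_comm]; exact mul_le_mul_of_nonneg_right hK.le (sq_nonneg _)
    _ < _ := two_mul_mul_sq_lt_of_le (by positivity) hc₀ hc₂
        (by rw [hc0', hc1', hc2]; exact hes1_four_mul_le hE.le hw.le hwu ht)
        (by rw [hc0', hc1', hc2]; exact hes1_two_mul_sq_le hE.le hw.le hwu ht)
end

section
/- Let γ_1, θ, k, δ_1, δ_2, ε_2 and ε be positive real numbers, set x̄_0 = γ_1/(1+γ_1), and define c_0 = ε ε_2 δ_1 (γ_1+1), c_1 = ε(γ_1+1)(ε_2(2k+δ_1)+1) + ε_2(2kθx̄_0 + δ_1(1+θx̄_0)), c_2 = ε(γ_1+1) + ε_2(2k+δ_1) + θx̄_0 + 1, and a_1 = ε_2δ_2 + c_2, a_2 = ε_2δ_2 c_2 + c_1, a_3 = ε_2δ_2 c_1 + c_0, a_4 = ε_2δ_2 c_0 + 2ε ε_2² δ_1 δ_2. Then a_3(a_1 a_2 − a_3) − a_1² a_4 > 0. -/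
/-!
Writing `d = ε₂δ₂` and `q = εε₂δ₁`, the quartic is a perturbed product
`W₁(λ) = (λ + d)(λ³ + c₂λ² + c₁λ + c₀) + 2qd`, and its Hurwitz determinant is
`(c₁c₂ − c₀)(d³ + c₂d² + c₁d + c₀) − 2qd(d + c₂)²`. Comparing coefficients of `d`, it is
positive as soon as `c₁c₂ − c₀ ≥ 4q` and `c₁(c₁c₂ − c₀) ≥ 2qc₂²`. Both reduce to polynomials
with nonnegative coefficients in the positive parameters, `x̄₀` being treated as an
independent positive variable.
-/

def hurwitzDet4 {R : Type*} [CommRing R] (a₁ a₂ a₃ a₄ : R) : R :=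
  a₃ * (a₁ * a₂ - a₃) - a₁ ^ 2 * a₄

theorem hurwitzDet4_mul_add {R : Type*} [CommRing R] (d c₀ c₁ c₂ e : R) :
    hurwitzDet4 (d + c₂) (d * c₂ + c₁) (d * c₁ + c₀) (d * c₀ + e) =
      (c₁ * c₂ - c₀) * (d ^ 3 + c₂ * d ^ 2 + c₁ * d + c₀) - (d + c₂) ^ 2 * e := by
  unfold hurwitzDet4; ring

theorem hurwitzDet4_mul_add_pos {q d c₀ c₁ c₂ : ℝ} (hq : 0 < q) (hd : 0 < d) (hc₀ : 0 < c₀)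
    (hc₂ : 0 < c₂) (h₁ : 4 * q ≤ c₁ * c₂ - c₀) (h₂ : 2 * q * c₂ ^ 2 ≤ c₁ * (c₁ * c₂ - c₀)) :
    0 < hurwitzDet4 (d + c₂) (d * c₂ + c₁) (d * c₁ + c₀) (d * c₀ + 2 * q * d) := by
  rw [hurwitzDet4_mul_add]
  have h₃ : 2 * q * d ^ 3 ≤ (c₁ * c₂ - c₀) * d ^ 3 := by gcongr; linarith
  have h₄ : 4 * q * (c₂ * d ^ 2) ≤ (c₁ * c₂ - c₀) * (c₂ * d ^ 2) := by gcongr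
  have h₅ : 2 * q * c₂ ^ 2 * d ≤ c₁ * (c₁ * c₂ - c₀) * d := by gcongr
  have h₆ : 0 < (c₁ * c₂ - c₀) * c₀ := mul_pos (by linarith) hc₀
  linarith

section Hes1

variable {γ1 θ kp δ1 ε2 ε x0 c0 c1 c2 : ℝ}

-- Expanded, `c₁c₂ − c₀ − 4q` contains the monomial `−2εε₂δ₁`; after multiplying by `c₂` all
-- coefficients are nonnegative.
theorem hes1_four_mul_le_s9 (hγ1 : 0 < γ1) (hθ : 0 < θ) (hkp : 0 < kp) (hδ1 : 0 < δ1)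
    (hε2 : 0 < ε2) (hε : 0 < ε) (hx0 : 0 < x0)
    (hc0 : c0 = ε * ε2 * δ1 * (γ1 + 1))
    (hc1 : c1 = ε * (γ1 + 1) * (ε2 * (2 * kp + δ1) + 1)
        + ε2 * (2 * kp * θ * x0 + δ1 * (1 + θ * x0)))
    (hc2 : c2 = ε * (γ1 + 1) + ε2 * (2 * kp + δ1) + θ * x0 + 1) :
    4 * (ε * ε2 * δ1) ≤ c1 * c2 - c0 := by
  have hc2_pos : 0 < c2 := by rw [hc2]; positivity
  have h : 0 ≤ c2 * (c1 * c2 - c0 - 4 * (ε * ε2 * δ1)) := by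
    subst hc0 hc1 hc2; ring_nf; positivity
  nlinarith

theorem hes1_two_mul_sq_le_s9 (hγ1 : 0 < γ1) (hθ : 0 < θ) (hkp : 0 < kp) (hδ1 : 0 < δ1)
    (hε2 : 0 < ε2) (hε : 0 < ε) (hx0 : 0 < x0)
    (hc0 : c0 = ε * ε2 * δ1 * (γ1 + 1))
    (hc1 : c1 = ε * (γ1 + 1) * (ε2 * (2 * kp + δ1) + 1)
        + ε2 * (2 * kp * θ * x0 + δ1 * (1 + θ * x0)))
    (hc2 : c2 = ε * (γ1 + 1) + ε2 * (2 * kp + δ1) + θ * x0 + 1) :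
    2 * (ε * ε2 * δ1) * c2 ^ 2 ≤ c1 * (c1 * c2 - c0) := by
  rw [← sub_nonneg]; subst hc0 hc1 hc2; ring_nf; positivity

end Hes1

/-- The Hurwitz determinant condition `a₃(a₁a₂ − a₃) − a₁²a₄ > 0` for the
quartic characteristic polynomial of the full Hes1 model with one binding
site at its positive steady state. -/
theorem stmt_9 (γ1 θ kp δ1 δ2 ε2 ε : ℝ)
    (hγ1 : 0 < γ1) (hθ : 0 < θ) (hkp : 0 < kp) (hδ1 : 0 < δ1) (hδ2 : 0 < δ2)
    (hε2 : 0 < ε2) (hε : 0 < ε)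
    (x0 : ℝ) (hx0 : x0 = γ1 / (1 + γ1))
    (c0 c1 c2 a1 a2 a3 a4 : ℝ)
    (hc0 : c0 = ε * ε2 * δ1 * (γ1 + 1))
    (hc1 : c1 = ε * (γ1 + 1) * (ε2 * (2 * kp + δ1) + 1)
        + ε2 * (2 * kp * θ * x0 + δ1 * (1 + θ * x0)))
    (hc2 : c2 = ε * (γ1 + 1) + ε2 * (2 * kp + δ1) + θ * x0 + 1)
    (ha1 : a1 = ε2 * δ2 + c2)
    (ha2 : a2 = ε2 * δ2 * c2 + c1)
    (ha3 : a3 = ε2 * δ2 * c1 + c0)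
    (ha4 : a4 = ε2 * δ2 * c0 + 2 * ε * ε2 ^ 2 * δ1 * δ2) :
    a3 * (a1 * a2 - a3) - a1 ^ 2 * a4 > 0 := by
  have hx0_pos : 0 < x0 := by rw [hx0]; positivity
  have key := hurwitzDet4_mul_add_pos (q := ε * ε2 * δ1) (d := ε2 * δ2) (by positivity)
    (by positivity) (by rw [hc0]; positivity) (by rw [hc2]; positivity)
    (hes1_four_mul_le_s9 hγ1 hθ hkp hδ1 hε2 hε hx0_pos hc0 hc1 hc2)
    (hes1_two_mul_sq_le_s9 hγ1 hθ hkp hδ1 hε2 hε hx0_pos hc0 hc1 hc2)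
  have ha4' : a4 = ε2 * δ2 * c0 + 2 * (ε * ε2 * δ1) * (ε2 * δ2) := by rw [ha4]; ring
  rw [ha1, ha2, ha3, ha4']
  exact key
end

section
/- Let γ_1, θ, k, δ_1, δ_2, ε_2 and ε be positive real numbers, set x̄_0 = γ_1/(1+γ_1), and define c_0 = ε ε_2 δ_1 (γ_1+1), c_1 = ε(γ_1+1)(ε_2(2k+δ_1)+1) + ε_2(2kθx̄_0 + δ_1(1+θx̄_0)), c_2 = ε(γ_1+1) + ε_2(2k+δ_1) + θx̄_0 + 1, and a_1 = ε_2δ_2 + c_2, a_2 = ε_2δ_2 c_2 + c_1, a_3 = ε_2δ_2 c_1 + c_0. Then a_1 a_2 − a_3 > 0; in fact a_1 a_2 − a_3 = ε_2δ_2 c_2(ε_2δ_2 + c_2) + c_3(c_0 + c_4) + c_4 where c_3 = ε(γ_1+1) + ε_2(2k+δ_1) + θx̄_0 and c_4 = ε(γ_1+1)(2ε_2 k + 1) + ε_2(2kθx̄_0 + δ_1(1+θx̄_0)), and c_3, c_4 > 0. -/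
/-!
Write `s = ε₂δ₂`. Expanding, `a₁a₂ − a₃ = s c₂ (s + c₂) + (c₂c₁ − c₀)`, and the coefficients
split as `c₁ = c₀ + c₄` and `c₂ = c₃ + 1`, so `c₂c₁ − c₀ = c₃(c₀ + c₄) + c₄`. Every summand is
positive because all parameters, and hence `x̄₀`, are.
-/

theorem hurwitz_quartic_minor_eq {R : Type*} [CommRing R] (s c0 c1 c2 c3 c4 : R)
    (hc1 : c1 = c0 + c4) (hc2 : c2 = c3 + 1) :
    (s + c2) * (s * c2 + c1) - (s * c1 + c0) = s * c2 * (s + c2) + c3 * (c0 + c4) + c4 := by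
  subst hc1 hc2
  ring

/-- The Routh–Hurwitz quantity `a₁a₂ − a₃` for the quartic characteristic
polynomial of the full Hes1 model with one binding site is positive, with the
explicit decomposition `a₁a₂ − a₃ = ε₂δ₂c₂(ε₂δ₂ + c₂) + c₃(c₀ + c₄) + c₄`
where `c₃, c₄ > 0`. -/
theorem stmt_10 (γ1 θ kp δ1 δ2 ε2 ε : ℝ)
    (hγ1 : 0 < γ1) (hθ : 0 < θ) (hkp : 0 < kp) (hδ1 : 0 < δ1) (hδ2 : 0 < δ2)
    (hε2 : 0 < ε2) (hε : 0 < ε)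
    (x0 : ℝ) (hx0 : x0 = γ1 / (1 + γ1))
    (c0 c1 c2 c3 c4 a1 a2 a3 : ℝ)
    (hc0 : c0 = ε * ε2 * δ1 * (γ1 + 1))
    (hc1 : c1 = ε * (γ1 + 1) * (ε2 * (2 * kp + δ1) + 1)
        + ε2 * (2 * kp * θ * x0 + δ1 * (1 + θ * x0)))
    (hc2 : c2 = ε * (γ1 + 1) + ε2 * (2 * kp + δ1) + θ * x0 + 1)
    (hc3 : c3 = ε * (γ1 + 1) + ε2 * (2 * kp + δ1) + θ * x0)
    (hc4 : c4 = ε * (γ1 + 1) * (2 * ε2 * kp + 1)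
        + ε2 * (2 * kp * θ * x0 + δ1 * (1 + θ * x0)))
    (ha1 : a1 = ε2 * δ2 + c2)
    (ha2 : a2 = ε2 * δ2 * c2 + c1)
    (ha3 : a3 = ε2 * δ2 * c1 + c0) :
    a1 * a2 - a3 > 0 ∧
    a1 * a2 - a3 = ε2 * δ2 * c2 * (ε2 * δ2 + c2) + c3 * (c0 + c4) + c4 ∧
    0 < c3 ∧ 0 < c4 := by
  have hx0_pos : 0 < x0 := hx0 ▸ by positivity
  have hc1_split : c1 = c0 + c4 := by rw [hc1, hc0, hc4]; ring
  have hc2_split : c2 = c3 + 1 := by rw [hc2, hc3]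
  have hc0_pos : 0 < c0 := hc0 ▸ by positivity
  have hc3_pos : 0 < c3 := hc3 ▸ by positivity
  have hc4_pos : 0 < c4 := hc4 ▸ by positivity
  have hc2_pos : 0 < c2 := by linarith
  have hminor : a1 * a2 - a3 = ε2 * δ2 * c2 * (ε2 * δ2 + c2) + c3 * (c0 + c4) + c4 := by
    rw [ha1, ha2, ha3]
    exact hurwitz_quartic_minor_eq _ _ _ _ _ _ hc1_split hc2_split
  refine ⟨?_, hminor, hc3_pos, hc4_pos⟩
  rw [hminor]
  positivity
end

section
/- Let γ_1, θ, k, δ_1, δ_2, ε_1 be positive real numbers, set η = (1+γ_1)/(1+γ_1(1+θ)), and define a_1 = δ_1 + δ_2 + η(1+γ_1)/ε_1 + 2kηθγ_1/(1+γ_1), a_2 = η(δ_1+δ_2)(1+γ_1)/ε_1 + 2kηθδ_2 γ_1/(1+γ_1) + δ_1δ_2, a_3 = ηδ_1δ_2(3+γ_1)/ε_1. Then every complex root λ of the polynomial W(λ) = λ³ + a_1λ² + a_2λ + a_3 satisfies Re(λ) < 0. -/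
/-!
The coefficients are positive, so by the Routh–Hurwitz criterion for cubics it suffices to check
`a₃ < a₁ a₂`. Writing `A = η(1+γ₁)/ε₁`, one has `a₃ ≤ 4Aδ₁δ₂ ≤ A(δ₁+δ₂)²`, and `A(δ₁+δ₂)²` is just
one of the (positive) terms of the expanded product `a₁ a₂`.
-/

theorem Complex.re_neg_of_cubic_eq_zero {a₁ a₂ a₃ : ℝ} (h₁ : 0 < a₁) (h₂ : 0 < a₂) (h₃ : 0 < a₃)
    (hH : a₃ < a₁ * a₂) {z : ℂ} (hz : z ^ 3 + (a₁ : ℂ) * z ^ 2 + (a₂ : ℂ) * z + (a₃ : ℂ) = 0) :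
    z.re < 0 := by
  obtain ⟨x, y⟩ := z
  have hz' := Complex.ext_iff.mp hz
  simp only [pow_succ, pow_zero, one_mul, add_re, add_im, mul_re, mul_im, ofReal_re, ofReal_im,
    zero_mul, sub_zero, add_zero, zero_re, zero_im] at hz'
  have hre : x ^ 3 - 3 * x * y ^ 2 + a₁ * (x ^ 2 - y ^ 2) + a₂ * x + a₃ = 0 := by
    linear_combination hz'.1
  have him : y * (3 * x ^ 2 - y ^ 2 + 2 * a₁ * x + a₂) = 0 := by
    linear_combination hz'.2
  show x < 0
  by_contra! hx
  rcases mul_eq_zero.mp him with rfl | hy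
  · nlinarith [pow_nonneg hx 3, mul_nonneg h₁.le (sq_nonneg x)]
  · -- eliminating `y²` from the real part leaves a polynomial in `x` that is negative for `x ≥ 0`
    have : -8 * x ^ 3 - 8 * a₁ * x ^ 2 - 2 * (a₁ ^ 2 + a₂) * x + (a₃ - a₁ * a₂) = 0 := by
      linear_combination hre - (3 * x + a₁) * hy
    nlinarith [pow_nonneg hx 3, mul_nonneg h₁.le (sq_nonneg x),
      mul_nonneg (add_pos (pow_pos h₁ 2) h₂).le hx]

/-- Every complex root of the cubic characteristic polynomial `W` of the
Jacobian of the reduced Hes1 model without dimers (one binding site) at its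
positive steady state has negative real part. -/
theorem stmt_11 (γ1 θ kp δ1 δ2 ε1 : ℝ)
    (hγ1 : 0 < γ1) (hθ : 0 < θ) (hkp : 0 < kp) (hδ1 : 0 < δ1) (hδ2 : 0 < δ2)
    (hε1 : 0 < ε1)
    (η : ℝ) (hη : η = (1 + γ1) / (1 + γ1 * (1 + θ)))
    (a1 a2 a3 : ℝ)
    (ha1 : a1 = δ1 + δ2 + η * (1 + γ1) / ε1 + 2 * kp * η * θ * γ1 / (1 + γ1))
    (ha2 : a2 = η * (δ1 + δ2) * (1 + γ1) / ε1
        + 2 * kp * η * θ * δ2 * γ1 / (1 + γ1) + δ1 * δ2)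
    (ha3 : a3 = η * δ1 * δ2 * (3 + γ1) / ε1) :
    ∀ lam : ℂ, lam ^ 3 + (a1 : ℂ) * lam ^ 2 + (a2 : ℂ) * lam + (a3 : ℂ) = 0 →
      lam.re < 0 := by
  have hη0 : 0 < η := hη ▸ by positivity
  set A := η * (1 + γ1) / ε1
  set B := 2 * kp * η * θ * γ1 / (1 + γ1)
  have hA : 0 < A := by positivity
  have ha2' : a2 = A * (δ1 + δ2) + B * δ2 + δ1 * δ2 := by rw [ha2]; ring
  have ha3' : 4 * A * δ1 * δ2 - a3 = (1 + 3 * γ1) * η * δ1 * δ2 / ε1 := by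
    rw [ha3]; simp only [A]; ring
  have ha1a2 : a1 * a2 - A * (δ1 + δ2) ^ 2 = (δ1 + δ2) * (B * δ2 + δ1 * δ2) + (A + B) * a2 := by
    rw [ha1, ha2']; ring
  have ha2_pos : 0 < a2 := by rw [ha2']; positivity
  refine fun lam => Complex.re_neg_of_cubic_eq_zero (by rw [ha1]; positivity) ha2_pos
    (by rw [ha3]; positivity) ?_
  calc a3 < 4 * A * δ1 * δ2 := by linarith [show 0 < (1 + 3 * γ1) * η * δ1 * δ2 / ε1 by positivity]
    _ ≤ A * (δ1 + δ2) ^ 2 := by nlinarith [mul_nonneg hA.le (sq_nonneg (δ1 - δ2))]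
    _ < a1 * a2 := by linarith [show 0 < (δ1 + δ2) * (B * δ2 + δ1 * δ2) + (A + B) * a2 by positivity]
end

section
/- Let γ_1, θ, k, δ_1, δ_2, ε_1 be positive real numbers, set η = (1+γ_1)/(1+γ_1(1+θ)), and define a_1 = δ_1 + δ_2 + η(1+γ_1)/ε_1 + 2kηθγ_1/(1+γ_1), a_2 = η(δ_1+δ_2)(1+γ_1)/ε_1 + 2kηθδ_2 γ_1/(1+γ_1) + δ_1δ_2, a_3 = ηδ_1δ_2(3+γ_1)/ε_1. Then a_1 a_2 > a_3. -/
/-! Write `A = η(1+γ₁)/ε₁` and `B = 2kηθγ₁/(1+γ₁)`, both positive. Then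
`a₁ = δ₁ + δ₂ + A + B` and `a₂ = A(δ₁ + δ₂) + Bδ₂ + δ₁δ₂`, so `a₁a₂` strictly exceeds
`A(δ₁ + δ₂)² ≥ 4Aδ₁δ₂`, whereas `a₃ = Aδ₁δ₂(3 + γ₁)/(1 + γ₁) ≤ 4Aδ₁δ₂`. -/

theorem four_mul_lt_add_mul_add {x y A B : ℝ} (hx : 0 < x) (hy : 0 < y) (hA : 0 < A)
    (hB : 0 ≤ B) : 4 * A * x * y < (x + y + A + B) * (A * (x + y) + B * y + x * y) := by
  have hrest : 0 < (x + y) * (B * y + x * y) + (A + B) * (A * (x + y) + B * y + x * y) := by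
    positivity
  calc 4 * A * x * y ≤ A * (x + y) ^ 2 := by nlinarith [sq_nonneg (x - y)]
    _ < (x + y + A + B) * (A * (x + y) + B * y + x * y) := by linear_combination hrest

/-- The Routh–Hurwitz inequality `a₁a₂ > a₃` for the cubic characteristic
polynomial of the reduced Hes1 model without dimers (one binding site) at its
positive steady state. -/
theorem stmt_12 (γ1 θ kp δ1 δ2 ε1 : ℝ)
    (hγ1 : 0 < γ1) (hθ : 0 < θ) (hkp : 0 < kp) (hδ1 : 0 < δ1) (hδ2 : 0 < δ2)
    (hε1 : 0 < ε1)
    (η : ℝ) (hη : η = (1 + γ1) / (1 + γ1 * (1 + θ)))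
    (a1 a2 a3 : ℝ)
    (ha1 : a1 = δ1 + δ2 + η * (1 + γ1) / ε1 + 2 * kp * η * θ * γ1 / (1 + γ1))
    (ha2 : a2 = η * (δ1 + δ2) * (1 + γ1) / ε1
        + 2 * kp * η * θ * δ2 * γ1 / (1 + γ1) + δ1 * δ2)
    (ha3 : a3 = η * δ1 * δ2 * (3 + γ1) / ε1) :
    a1 * a2 > a3 := by
  have hη_pos : 0 < η := by rw [hη]; positivity
  set A := η * (1 + γ1) / ε1 with hA
  set B := 2 * kp * η * θ * γ1 / (1 + γ1) with hB
  have ha2' : a2 = A * (δ1 + δ2) + B * δ2 + δ1 * δ2 := by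
    rw [ha2, hA, hB]; ring
  calc a3 = η / ε1 * δ1 * δ2 * (3 + γ1) := by rw [ha3]; ring
    _ ≤ η / ε1 * δ1 * δ2 * (4 * (1 + γ1)) := by gcongr; linarith
    _ = 4 * A * δ1 * δ2 := by ring
    _ < a1 * a2 := by
      rw [ha1, ha2']
      exact four_mul_lt_add_mul_add hδ1 hδ2 (by positivity) (by positivity)
end

section
/- Let k, δ_1, δ_2, ε_2, r_0 be positive real numbers, let p < 0 be a real number with −p < ((ε_2(2k+δ_1)+1)·(ε_2δ_2(2k+δ_1+δ_2)+δ_1+δ_2)) / (2ε_2 r_0 δ_1 δ_2), and set A = 2k + δ_1. Then every complex root λ of the polynomial W(λ) = λ³ + (A + δ_2 + 1/ε_2)λ² + (δ_1/ε_2 + δ_2(A + 1/ε_2))λ + (δ_1δ_2/ε_2)(1 − 2 r_0 p) satisfies Re(λ) < 0. -/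
/-!
Routh–Hurwitz for cubics: with `z = x + iy` and `x ≥ 0`, the imaginary part of the cubic vanishes
only if `y = 0` or `y² = 3x² + 2ax + b`; substituting into the real part leaves, respectively,
`x³ + ax² + bx + c` and `-(8x³ + 8ax² + 2(a² + b)x + (ab - c))`, neither of which can vanish.
For the Hes1 characteristic polynomial, `ε₂² (ab - c)` is the product in the stability condition
plus `2 ε₂ r₀ δ₁ δ₂ p`, so that condition is exactly `c < ab`.
-/

theorem Complex.re_neg_of_cubic_eq_zero_s13 {a b c : ℝ} (ha : 0 < a) (hc : 0 < c) (habc : c < a * b)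
    {z : ℂ} (hz : z ^ 3 + (a : ℂ) * z ^ 2 + (b : ℂ) * z + (c : ℂ) = 0) : z.re < 0 := by
  by_contra! hx
  have hb : 0 < b := pos_of_mul_pos_right (hc.trans habc) ha.le
  have hre := congrArg Complex.re hz
  have him := congrArg Complex.im hz
  simp only [pow_succ, pow_zero, one_mul, Complex.add_re, Complex.add_im, Complex.mul_re,
    Complex.mul_im, Complex.ofReal_re, Complex.ofReal_im, Complex.zero_re, Complex.zero_im]
    at hre him
  set x := z.re
  set y := z.im
  have hfac : y * (3 * x ^ 2 - y ^ 2 + 2 * a * x + b) = 0 := by linear_combination him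
  rcases mul_eq_zero.mp hfac with hy | hy
  · have hreal : x ^ 3 + a * x ^ 2 + b * x + c = 0 := by
      rw [hy] at hre
      linear_combination hre
    have : 0 < x ^ 3 + a * x ^ 2 + b * x + c := by positivity
    linarith
  · have hreal : 8 * x ^ 3 + 8 * a * x ^ 2 + 2 * (a ^ 2 + b) * x + (a * b - c) = 0 := by
      linear_combination (3 * x + a) * hy - hre
    have : 0 < 8 * x ^ 3 + 8 * a * x ^ 2 + 2 * (a ^ 2 + b) * x + (a * b - c) := by
      have : 0 < a * b - c := sub_pos.mpr habc
      positivity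
    linarith

/-- Conditional stability of the positive steady state of the reduced Hes1
model with dimers: under the stability condition on `−p = −ψ'(1)`, every
complex root of the cubic characteristic polynomial has negative real part. -/
theorem stmt_13 (kp δ1 δ2 ε2 r0 : ℝ)
    (hkp : 0 < kp) (hδ1 : 0 < δ1) (hδ2 : 0 < δ2) (hε2 : 0 < ε2) (hr0 : 0 < r0)
    (p : ℝ) (hp : p < 0)
    (hstab : -p < ((ε2 * (2 * kp + δ1) + 1) * (ε2 * δ2 * (2 * kp + δ1 + δ2) + δ1 + δ2))
        / (2 * ε2 * r0 * δ1 * δ2))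
    (A : ℝ) (hA : A = 2 * kp + δ1) :
    ∀ lam : ℂ, lam ^ 3 + ((A + δ2 + 1 / ε2 : ℝ) : ℂ) * lam ^ 2
        + ((δ1 / ε2 + δ2 * (A + 1 / ε2) : ℝ) : ℂ) * lam
        + ((δ1 * δ2 / ε2 * (1 - 2 * r0 * p) : ℝ) : ℂ) = 0 → lam.re < 0 := by
  intro lam hlam
  subst hA
  have hstab' := (lt_div_iff₀ (by positivity)).mp hstab
  refine Complex.re_neg_of_cubic_eq_zero_s13 (by positivity) ?_ ?_ hlam
  · have : 0 < 1 - 2 * r0 * p := by nlinarith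
    positivity
  · have hgap : ε2 ^ 2 * ((2 * kp + δ1 + δ2 + 1 / ε2) * (δ1 / ε2 + δ2 * (2 * kp + δ1 + 1 / ε2))
          - δ1 * δ2 / ε2 * (1 - 2 * r0 * p))
        = (ε2 * (2 * kp + δ1) + 1) * (ε2 * δ2 * (2 * kp + δ1 + δ2) + δ1 + δ2)
          + p * (2 * ε2 * r0 * δ1 * δ2) := by
      field_simp
      ring
    have : 0 < ε2 ^ 2 * ((2 * kp + δ1 + δ2 + 1 / ε2) * (δ1 / ε2 + δ2 * (2 * kp + δ1 + 1 / ε2))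
        - δ1 * δ2 / ε2 * (1 - 2 * r0 * p)) := by
      rw [hgap]
      linarith
    exact sub_pos.mp (pos_of_mul_pos_right this (sq_nonneg ε2))
end

section
/- Let k, δ_1, δ_2, ε_2, r_0 be positive real numbers, let p < 0 be a real number with −p > ((ε_2(2k+δ_1)+1)·(ε_2δ_2(2k+δ_1+δ_2)+δ_1+δ_2)) / (2ε_2 r_0 δ_1 δ_2), and set A = 2k + δ_1. Then the polynomial W(λ) = λ³ + (A + δ_2 + 1/ε_2)λ² + (δ_1/ε_2 + δ_2(A + 1/ε_2))λ + (δ_1δ_2/ε_2)(1 − 2 r_0 p) has a complex root λ with Re(λ) > 0. -/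
/-!
A real monic cubic `z³ + a z² + b z + c` with `a b < c` is positive at `-a` and tends to `-∞`,
so it has a real root `r < -a`. Dividing out `z - r` leaves a monic quadratic whose linear
coefficient `a + r` is negative; its two roots have real parts summing to `-(a + r) > 0`.
For the characteristic polynomial of the Hes1 model, `a b < c` is exactly the reversed
stability inequality, since `ε₂² (c - a b) = -2 ε₂ r₀ δ₁ δ₂ p - N` with `N` its numerator.
-/

lemma exists_quadratic_root_re_pos (s t : ℂ) (hs : s.re < 0) :
    ∃ z : ℂ, z ^ 2 + s * z + t = 0 ∧ 0 < z.re := by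
  obtain ⟨w, hw⟩ := IsAlgClosed.exists_eq_mul_self (s ^ 2 - 4 * t)
  have hplus : ((-s + w) / 2) ^ 2 + s * ((-s + w) / 2) + t = 0 := by
    linear_combination (-1 / 4 : ℂ) * hw
  have hminus : ((-s - w) / 2) ^ 2 + s * ((-s - w) / 2) + t = 0 := by
    linear_combination (-1 / 4 : ℂ) * hw
  by_contra! h
  have h₁ := h _ hplus
  have h₂ := h _ hminus
  simp only [Complex.div_ofNat_re, Complex.add_re, Complex.sub_re, Complex.neg_re] at h₁ h₂
  linarith

lemma exists_cubic_root_lt_neg (a b c : ℝ) (h : a * b < c) :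
    ∃ r < -a, r ^ 3 + a * r ^ 2 + b * r + c = 0 := by
  set f : ℝ → ℝ := fun x => x ^ 3 + a * x ^ 2 + b * x + c
  set m := |a| + |b| + |c| + 1
  have hfm : f (-m) < 0 := by
    simp only [f]
    nlinarith [abs_nonneg a, abs_nonneg b, abs_nonneg c, le_abs_self a, neg_abs_le a,
      le_abs_self b, neg_abs_le b, le_abs_self c]
  have hfa : 0 < f (-a) := by simp only [f]; linarith
  have hma : -m ≤ -a := by linarith [le_abs_self a, abs_nonneg b, abs_nonneg c]
  obtain ⟨r, hr, hfr⟩ := intermediate_value_Icc hma (by fun_prop : Continuous f).continuousOn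
    ⟨hfm.le, hfa.le⟩
  have hra : r ≠ -a := by rintro rfl; exact hfa.ne' hfr
  exact ⟨r, lt_of_le_of_ne hr.2 hra, hfr⟩

lemma exists_cubic_root_re_pos (a b c : ℝ) (h : a * b < c) :
    ∃ z : ℂ, z ^ 3 + a * z ^ 2 + b * z + c = 0 ∧ 0 < z.re := by
  obtain ⟨r, hra, hr⟩ := exists_cubic_root_lt_neg a b c h
  obtain ⟨z, hz, hre⟩ := exists_quadratic_root_re_pos ((a + r : ℝ) : ℂ)
    ((b + a * r + r ^ 2 : ℝ) : ℂ) (by rw [Complex.ofReal_re]; linarith)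
  refine ⟨z, ?_, hre⟩
  have hr' : ((r ^ 3 + a * r ^ 2 + b * r + c : ℝ) : ℂ) = 0 := by exact_mod_cast hr
  push_cast at hz hr'
  linear_combination (z - r) * hz + hr'

theorem stmt_14_general (kp δ1 δ2 ε2 r0 : ℝ)
    (hδ1 : 0 < δ1) (hδ2 : 0 < δ2) (hε2 : 0 < ε2) (hr0 : 0 < r0)
    (p : ℝ)
    (hunstab : -p > ((ε2 * (2 * kp + δ1) + 1) * (ε2 * δ2 * (2 * kp + δ1 + δ2) + δ1 + δ2))
        / (2 * ε2 * r0 * δ1 * δ2))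
    (A : ℝ) (hA : A = 2 * kp + δ1) :
    ∃ lam : ℂ, lam ^ 3 + ((A + δ2 + 1 / ε2 : ℝ) : ℂ) * lam ^ 2
        + ((δ1 / ε2 + δ2 * (A + 1 / ε2) : ℝ) : ℂ) * lam
        + ((δ1 * δ2 / ε2 * (1 - 2 * r0 * p) : ℝ) : ℂ) = 0 ∧ 0 < lam.re := by
  subst hA
  apply exists_cubic_root_re_pos
  have hD : 0 < 2 * ε2 * r0 * δ1 * δ2 := by positivity
  have hN := (div_lt_iff₀ hD).1 hunstab
  have hgap : δ1 * δ2 / ε2 * (1 - 2 * r0 * p)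
      - (2 * kp + δ1 + δ2 + 1 / ε2) * (δ1 / ε2 + δ2 * (2 * kp + δ1 + 1 / ε2))
      = (-p * (2 * ε2 * r0 * δ1 * δ2)
        - (ε2 * (2 * kp + δ1) + 1) * (ε2 * δ2 * (2 * kp + δ1 + δ2) + δ1 + δ2)) / ε2 ^ 2 := by
    field_simp
    ring
  rw [← sub_pos, hgap]
  exact div_pos (by linarith) (by positivity)

/-- Instability of the positive steady state of the reduced Hes1 model with
dimers: when the stability inequality is strictly reversed, the cubic
characteristic polynomial has a root with positive real part. -/
theorem stmt_14 (kp δ1 δ2 ε2 r0 : ℝ)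
    (hkp : 0 < kp) (hδ1 : 0 < δ1) (hδ2 : 0 < δ2) (hε2 : 0 < ε2) (hr0 : 0 < r0)
    (p : ℝ) (hp : p < 0)
    (hunstab : -p > ((ε2 * (2 * kp + δ1) + 1) * (ε2 * δ2 * (2 * kp + δ1 + δ2) + δ1 + δ2))
        / (2 * ε2 * r0 * δ1 * δ2))
    (A : ℝ) (hA : A = 2 * kp + δ1) :
    ∃ lam : ℂ, lam ^ 3 + ((A + δ2 + 1 / ε2 : ℝ) : ℂ) * lam ^ 2
        + ((δ1 / ε2 + δ2 * (A + 1 / ε2) : ℝ) : ℂ) * lam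
        + ((δ1 * δ2 / ε2 * (1 - 2 * r0 * p) : ℝ) : ℂ) = 0 ∧ 0 < lam.re :=
  stmt_14_general kp δ1 δ2 ε2 r0 hδ1 hδ2 hε2 hr0 p hunstab A hA
end

section
/- Let k ≥ 0 and ε_2, δ_1, δ_2 > 0 be real numbers. Then ((ε_2(2k+δ_1)+1)·(ε_2δ_2(2k+δ_1+δ_2)+δ_1+δ_2)) / (2ε_2 δ_1 δ_2) ≥ (δ_1+δ_2)²/(2δ_1δ_2) + (1/(ε_2δ_1) + ε_2δ_1)/2 + (1/(ε_2δ_2) + ε_2δ_2)/2 ≥ 4, and the inequality is strict whenever k > 0. -/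
/-!
Expanding, the quantity minus the symmetric bound is `k` times a positive rational function of
`ε₂, δ₁, δ₂`, which gives both the weak and (for `k > 0`) the strict inequality. The symmetric bound
is at least `2 + 1 + 1` by AM–GM: `(δ₁ + δ₂)² ≥ 4 δ₁ δ₂` and `1 / x + x ≥ 2` for `x > 0`.
-/

noncomputable def hes1StabilityQuantity (k ε₂ δ₁ δ₂ : ℝ) : ℝ :=
  ((ε₂ * (2 * k + δ₁) + 1) * (ε₂ * δ₂ * (2 * k + δ₁ + δ₂) + δ₁ + δ₂)) / (2 * ε₂ * δ₁ * δ₂)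

noncomputable def hes1SymmetricBound (ε₂ δ₁ δ₂ : ℝ) : ℝ :=
  (δ₁ + δ₂) ^ 2 / (2 * δ₁ * δ₂) + (1 / (ε₂ * δ₁) + ε₂ * δ₁) / 2 + (1 / (ε₂ * δ₂) + ε₂ * δ₂) / 2

lemma two_le_add_sq_div_two_mul {a b : ℝ} (ha : 0 < a) (hb : 0 < b) :
    2 ≤ (a + b) ^ 2 / (2 * a * b) := by
  rw [le_div_iff₀ (by positivity)]
  nlinarith [sq_nonneg (a - b)]

lemma one_le_one_div_add_self_div_two {x : ℝ} (hx : 0 < x) : 1 ≤ (1 / x + x) / 2 := by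
  have : 2 ≤ 1 / x + x := by
    rw [div_add' _ _ _ hx.ne', le_div_iff₀ hx]
    nlinarith [sq_nonneg (x - 1)]
  linarith

lemma four_le_hes1SymmetricBound {ε₂ δ₁ δ₂ : ℝ} (hε₂ : 0 < ε₂) (hδ₁ : 0 < δ₁) (hδ₂ : 0 < δ₂) :
    4 ≤ hes1SymmetricBound ε₂ δ₁ δ₂ := by
  have h₁₂ := two_le_add_sq_div_two_mul hδ₁ hδ₂
  have h₁ := one_le_one_div_add_self_div_two (mul_pos hε₂ hδ₁)
  have h₂ := one_le_one_div_add_self_div_two (mul_pos hε₂ hδ₂)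
  unfold hes1SymmetricBound
  linarith

lemma hes1StabilityQuantity_sub_hes1SymmetricBound {k ε₂ δ₁ δ₂ : ℝ}
    (hε₂ : ε₂ ≠ 0) (hδ₁ : δ₁ ≠ 0) (hδ₂ : δ₂ ≠ 0) :
    hes1StabilityQuantity k ε₂ δ₁ δ₂ - hes1SymmetricBound ε₂ δ₁ δ₂ =
      k * ((2 * k * ε₂ * δ₂ + 2 * ε₂ * δ₁ * δ₂ + ε₂ * δ₂ ^ 2 + δ₁ + 2 * δ₂) / (δ₁ * δ₂)) := by
  unfold hes1StabilityQuantity hes1SymmetricBound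
  field_simp
  ring

lemma hes1SymmetricBound_le_hes1StabilityQuantity {k ε₂ δ₁ δ₂ : ℝ} (hk : 0 ≤ k)
    (hε₂ : 0 < ε₂) (hδ₁ : 0 < δ₁) (hδ₂ : 0 < δ₂) :
    hes1SymmetricBound ε₂ δ₁ δ₂ ≤ hes1StabilityQuantity k ε₂ δ₁ δ₂ := by
  rw [← sub_nonneg,
    hes1StabilityQuantity_sub_hes1SymmetricBound hε₂.ne' hδ₁.ne' hδ₂.ne']
  positivity

lemma hes1SymmetricBound_lt_hes1StabilityQuantity {k ε₂ δ₁ δ₂ : ℝ} (hk : 0 < k)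
    (hε₂ : 0 < ε₂) (hδ₁ : 0 < δ₁) (hδ₂ : 0 < δ₂) :
    hes1SymmetricBound ε₂ δ₁ δ₂ < hes1StabilityQuantity k ε₂ δ₁ δ₂ := by
  rw [← sub_pos,
    hes1StabilityQuantity_sub_hes1SymmetricBound hε₂.ne' hδ₁.ne' hδ₂.ne']
  positivity

/-- The key estimate: the stability threshold quantity is bounded below by a
symmetric expression which is at least `4`; the first inequality is strict
whenever `k > 0`. -/
theorem stmt_16 (k ε2 δ1 δ2 : ℝ)
    (hk : 0 ≤ k) (hε2 : 0 < ε2) (hδ1 : 0 < δ1) (hδ2 : 0 < δ2) :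
    ((ε2 * (2 * k + δ1) + 1) * (ε2 * δ2 * (2 * k + δ1 + δ2) + δ1 + δ2))
        / (2 * ε2 * δ1 * δ2)
      ≥ (δ1 + δ2) ^ 2 / (2 * δ1 * δ2)
        + (1 / (ε2 * δ1) + ε2 * δ1) / 2 + (1 / (ε2 * δ2) + ε2 * δ2) / 2 ∧
    (δ1 + δ2) ^ 2 / (2 * δ1 * δ2)
        + (1 / (ε2 * δ1) + ε2 * δ1) / 2 + (1 / (ε2 * δ2) + ε2 * δ2) / 2 ≥ 4 ∧
    (0 < k →
      ((ε2 * (2 * k + δ1) + 1) * (ε2 * δ2 * (2 * k + δ1 + δ2) + δ1 + δ2))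
          / (2 * ε2 * δ1 * δ2)
        > (δ1 + δ2) ^ 2 / (2 * δ1 * δ2)
          + (1 / (ε2 * δ1) + ε2 * δ1) / 2 + (1 / (ε2 * δ2) + ε2 * δ2) / 2) :=
  ⟨hes1SymmetricBound_le_hes1StabilityQuantity hk hε2 hδ1 hδ2,
    four_le_hes1SymmetricBound hε2 hδ1 hδ2,
    fun hk' => hes1SymmetricBound_lt_hes1StabilityQuantity hk' hε2 hδ1 hδ2⟩
end

section
/- Let n be an integer with 1 ≤ n ≤ 4, let q be a real polynomial of degree at most n with all coefficients nonnegative, q(0) = 0 and q(1) > 0, set r_0 = 1 + q(1) and ψ(y) = 1/(1+q(y)), and let k, ε_2, δ_1, δ_2 be positive reals. Then −ψ'(1) < ((ε_2(2k+δ_1)+1)·(ε_2δ_2(2k+δ_1+δ_2)+δ_1+δ_2)) / (2ε_2 r_0 δ_1 δ_2). -/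
/-!
Writing `D = q'(1)` and `r₀ = 1 + q(1)`, we have `-ψ'(1) = D / r₀²`. Nonnegative coefficients give
the Euler-type bound `D ≤ (deg q) · q(1) ≤ 4 q(1) < 4 r₀`, so `-ψ'(1) < 4 / r₀`. On the other side,
dropping the `k`-terms and applying AM–GM to each of the three factors of
`(ε₂δ₁ + 1)(ε₂δ₂ + 1)(δ₁ + δ₂)` shows that the numerator of the threshold is at least `8 ε₂δ₁δ₂`,
so the threshold is at least `4 / r₀`.
-/

open Polynomial

namespace Polynomial

variable {q : ℝ[X]} {x : ℝ}

theorem eval_nonneg_of_coeff_nonneg (hq : ∀ i, 0 ≤ q.coeff i) (hx : 0 ≤ x) :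
    0 ≤ q.eval x := by
  rw [eval_eq_sum, sum_def]
  exact Finset.sum_nonneg fun i _ => mul_nonneg (hq i) (pow_nonneg hx i)

theorem mul_eval_derivative_le_natDegree_mul_eval (hq : ∀ i, 0 ≤ q.coeff i) (hx : 0 ≤ x) :
    x * q.derivative.eval x ≤ q.natDegree * q.eval x := by
  rw [derivative_eval, eval_eq_sum, sum_def, sum_def, Finset.mul_sum, Finset.mul_sum]
  refine Finset.sum_le_sum fun i hi => ?_
  have hi_le : (i : ℝ) ≤ q.natDegree := by exact_mod_cast le_natDegree_of_mem_supp i hi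
  rcases Nat.eq_zero_or_pos i with rfl | hi_pos
  · simpa using mul_nonneg (Nat.cast_nonneg _) (hq 0)
  · calc x * (q.coeff i * i * x ^ (i - 1)) = i * (q.coeff i * x ^ i) := by
          rw [← Nat.sub_add_cancel hi_pos, pow_succ]; push_cast [Nat.add_sub_cancel]; ring
      _ ≤ q.natDegree * (q.coeff i * x ^ i) :=
          mul_le_mul_of_nonneg_right hi_le (mul_nonneg (hq i) (pow_nonneg hx i))

theorem deriv_one_div_one_add_eval (hx : 1 + q.eval x ≠ 0) :
    deriv (fun y : ℝ => 1 / (1 + q.eval y)) x = -q.derivative.eval x / (1 + q.eval x) ^ 2 := by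
  simp only [one_div]
  exact (((q.hasDerivAt x).const_add 1).inv hx).deriv

end Polynomial

theorem eight_mul_le_one_add_mul_one_add_mul_add {ε δ₁ δ₂ : ℝ}
    (hε : 0 ≤ ε) (hδ₁ : 0 ≤ δ₁) (hδ₂ : 0 ≤ δ₂) :
    8 * ε * δ₁ * δ₂ ≤ (ε * δ₁ + 1) * (ε * δ₂ + 1) * (δ₁ + δ₂) := by
  nlinarith [mul_nonneg hδ₂ (sq_nonneg (ε * δ₁ - 1)), mul_nonneg hδ₁ (sq_nonneg (ε * δ₂ - 1)),
    mul_nonneg hε (sq_nonneg (δ₁ - δ₂)), mul_nonneg hε hδ₁, mul_nonneg hε hδ₂,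
    mul_nonneg (mul_nonneg hε hε) (mul_nonneg hδ₁ hδ₂)]

theorem stmt_17_general (n : ℕ) (hn4 : n ≤ 4) (q : Polynomial ℝ)
    (hdeg : q.natDegree ≤ n) (hcoeff : ∀ i, 0 ≤ q.coeff i)
    (r0 : ℝ) (hr0 : r0 = 1 + q.eval 1)
    (k ε2 δ1 δ2 : ℝ)
    (hk : 0 < k) (hε2 : 0 < ε2) (hδ1 : 0 < δ1) (hδ2 : 0 < δ2) :
    -(deriv (fun y : ℝ => 1 / (1 + q.eval y)) 1)
      < ((ε2 * (2 * k + δ1) + 1) * (ε2 * δ2 * (2 * k + δ1 + δ2) + δ1 + δ2))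
          / (2 * ε2 * r0 * δ1 * δ2) := by
  have hq1 : 0 ≤ q.eval 1 := eval_nonneg_of_coeff_nonneg hcoeff zero_le_one
  have hr0_pos : 0 < r0 := by linarith
  have hD : q.derivative.eval 1 ≤ 4 * q.eval 1 := by
    have hdeg4 : (q.natDegree : ℝ) ≤ 4 := by exact_mod_cast hdeg.trans hn4
    simpa using (mul_eval_derivative_le_natDegree_mul_eval hcoeff zero_le_one).trans
      (mul_le_mul_of_nonneg_right hdeg4 hq1)
  have hnum : 8 * ε2 * δ1 * δ2 ≤
      (ε2 * (2 * k + δ1) + 1) * (ε2 * δ2 * (2 * k + δ1 + δ2) + δ1 + δ2) := by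
    have := eight_mul_le_one_add_mul_one_add_mul_add hε2.le hδ1.le hδ2.le
    nlinarith [mul_pos (mul_pos hε2 hk) (add_pos hδ1 hδ2),
      mul_pos (mul_pos (mul_pos hε2 hε2) hδ2) hk, mul_pos (mul_pos hε2 hδ2) hk]
  have hden : 0 < 2 * ε2 * r0 * δ1 * δ2 := by positivity
  calc -(deriv (fun y : ℝ => 1 / (1 + q.eval y)) 1) = q.derivative.eval 1 / r0 ^ 2 := by
        rw [deriv_one_div_one_add_eval (hr0 ▸ hr0_pos.ne'), ← hr0, neg_div, neg_neg]
    _ < 4 / r0 := by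
        rw [div_lt_div_iff₀ (by positivity) hr0_pos]; nlinarith
    _ = 8 * ε2 * δ1 * δ2 / (2 * ε2 * r0 * δ1 * δ2) := by field_simp; ring
    _ ≤ _ := div_le_div_of_nonneg_right hnum hden.le

/-- For at most 4 binding sites the stability condition of the positive
steady state of the reduced Hes1 model with dimers holds for all parameter
values: `−ψ'(1)` is strictly below the stability threshold. -/
theorem stmt_17 (n : ℕ) (hn1 : 1 ≤ n) (hn4 : n ≤ 4) (q : Polynomial ℝ)
    (hdeg : q.natDegree ≤ n) (hcoeff : ∀ i, 0 ≤ q.coeff i)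
    (h0 : q.eval 0 = 0) (h1 : 0 < q.eval 1)
    (r0 : ℝ) (hr0 : r0 = 1 + q.eval 1)
    (k ε2 δ1 δ2 : ℝ)
    (hk : 0 < k) (hε2 : 0 < ε2) (hδ1 : 0 < δ1) (hδ2 : 0 < δ2) :
    -(deriv (fun y : ℝ => 1 / (1 + q.eval y)) 1)
      < ((ε2 * (2 * k + δ1) + 1) * (ε2 * δ2 * (2 * k + δ1 + δ2) + δ1 + δ2))
          / (2 * ε2 * r0 * δ1 * δ2) :=
  stmt_17_general n hn4 q hdeg hcoeff r0 hr0 k ε2 δ1 δ2 hk hε2 hδ1 hδ2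
end

section
/- Let n ≥ 5 be an integer, let r_0 > n/(n−4), set ψ(y) = 1/(1 + (r_0 − 1)·y^n), and set δ_1 = δ_2 = ε_2 = 1. Then there exists k_0 > 0 such that for every k with 0 < k < k_0 one has −ψ'(1) > ((ε_2(2k+δ_1)+1)·(ε_2δ_2(2k+δ_1+δ_2)+δ_1+δ_2)) / (2ε_2 r_0 δ_1 δ_2), i.e. −n(r_0−1)/r_0² exceeds in absolute value the stability threshold ((2k+2)(2k+4))/(2r_0). -/
/-! At `y = 1` the promoter function has value `1 / r₀` and slope `-n (r₀ - 1) / r₀²`, while the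
threshold `(2k + 2)(2k + 4) / (2 r₀)` tends to `4 / r₀` as `k → 0`. Clearing denominators, the
instability condition at `k = 0` reads `4 r₀ < n (r₀ - 1)`, which is exactly `r₀ > n / (n - 4)`;
by continuity in `k` it persists for all small `k > 0`. -/

open Filter Topology

theorem hasDerivAt_one_div_one_add_mul_pow_at_one (a : ℝ) (n : ℕ) (ha : 1 + a ≠ 0) :
    HasDerivAt (fun y : ℝ => 1 / (1 + a * y ^ n)) (-(a * n) / (1 + a) ^ 2) 1 := by
  have hden : HasDerivAt (fun y : ℝ => 1 + a * y ^ n) (a * n) 1 := by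
    simpa using ((hasDerivAt_pow n 1).const_mul a).const_add 1
  exact ((hasDerivAt_const (1 : ℝ) (1 : ℝ)).fun_div hden (by simpa using ha)).congr_deriv
    (by simp [neg_div])

theorem four_mul_lt_mul_sub_one {x r : ℝ} (hx : 4 < x) (hr : x / (x - 4) < r) :
    4 * r < x * (r - 1) := by
  have := (div_lt_iff₀ (sub_pos.2 hx)).mp hr
  linarith

theorem eventually_threshold_lt {c r : ℝ} (hr : 0 < r) (h : 4 * r < c) :
    ∀ᶠ k in 𝓝 (0 : ℝ), (2 * k + 2) * (2 * k + 4) / (2 * r) < c / r ^ 2 := by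
  have hzero : (2 * 0 + 2) * (2 * 0 + 4) / (2 * r) < c / r ^ 2 := by
    rw [div_lt_div_iff₀ (by positivity) (by positivity)]
    nlinarith
  exact (by fun_prop : ContinuousAt (fun k : ℝ => (2 * k + 2) * (2 * k + 4) / (2 * r)) 0)
    |>.eventually_lt continuousAt_const hzero

/-- For `n ≥ 5` binding sites and `r₀ > n/(n−4)`, with
`ψ(y) = 1/(1+(r₀−1)y^n)` and `δ₁ = δ₂ = ε₂ = 1`, the instability condition
holds for all sufficiently small `k > 0`: `−ψ'(1)` exceeds the stability
threshold, i.e. `n(r₀−1)/r₀² > (2k+2)(2k+4)/(2r₀)`. -/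
theorem stmt_18 (n : ℕ) (hn : 5 ≤ n) (r0 : ℝ)
    (hr0 : r0 > (n : ℝ) / ((n : ℝ) - 4))
    (δ1 δ2 ε2 : ℝ) (hδ1 : δ1 = 1) (hδ2 : δ2 = 1) (hε2 : ε2 = 1) :
    ∃ k0 : ℝ, 0 < k0 ∧ ∀ k : ℝ, 0 < k → k < k0 →
      -(deriv (fun y : ℝ => 1 / (1 + (r0 - 1) * y ^ n)) 1)
        > ((ε2 * (2 * k + δ1) + 1) * (ε2 * δ2 * (2 * k + δ1 + δ2) + δ1 + δ2))
            / (2 * ε2 * r0 * δ1 * δ2) ∧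
      (n : ℝ) * (r0 - 1) / r0 ^ 2 > ((2 * k + 2) * (2 * k + 4)) / (2 * r0) := by
  subst hδ1 hδ2 hε2
  have hn4 : (4 : ℝ) < n := by exact_mod_cast (by omega : 4 < n)
  have hkey : 4 * r0 < n * (r0 - 1) := four_mul_lt_mul_sub_one hn4 hr0
  have hr0pos : 0 < r0 := by nlinarith
  have hderiv : -deriv (fun y : ℝ => 1 / (1 + (r0 - 1) * y ^ n)) 1 = n * (r0 - 1) / r0 ^ 2 := by
    rw [(hasDerivAt_one_div_one_add_mul_pow_at_one (r0 - 1) n (by linarith)).deriv]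
    ring
  obtain ⟨k0, hk0, hsmall⟩ := Metric.eventually_nhds_iff.mp (eventually_threshold_lt hr0pos hkey)
  refine ⟨k0, hk0, fun k hk hkk => ?_⟩
  have hlt := hsmall (show dist k 0 < k0 by rw [Real.dist_0_eq_abs, abs_of_pos hk]; exact hkk)
  rw [hderiv]
  exact ⟨by convert hlt using 1; ring, hlt⟩
end
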